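/- arXiv:1706.05930 — 6 statements merged into one kernel-verified Lean document; each statement's English description precedes it below -/
import Mathlib

section
/- For all real numbers α, σ ≠ 0, θ > 0, y₀, and every natural number n ≥ 1, if α + e^{−σθ} − 1 ≠ 0 (equivalently (1−α)e^{σθ} ≠ 1), then the total discounted revenue over n complete rounds satisfies the closed form: Σ_{i=1}^{n} α(1−iα)(1−α)^{i−1} · (2πy₀/(σθ)) · (e^{σθ}−1) · e^{(i−1)σθ} = −(2πy₀/(σθ)) · (α/(α+e^{−σθ}−1)²) · [ (α−1)(2e^{−σθ}−e^{−2σθ}−1) + ( (α−1+nα)e^{σθ(n+1)} + (nα²−2α+2−2nα)e^{σθ(n+2)} + (α−1−nα²+nα)e^{σθ(n+3)} ) · e^{−3σθ}(1−α)^{n} ]. -/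
lemma aux_sum (α C t : ℝ) (ht : t ≠ 0) (h : α + t⁻¹ - 1 ≠ 0) :
    ∀ n : ℕ, 1 ≤ n →
    ∑ i ∈ Finset.Icc 1 n,
        α * (1 - (i : ℝ) * α) * (1 - α) ^ (i - 1) * C * (t - 1) * t ^ (i - 1)
      = -C * (α / (α + t⁻¹ - 1) ^ 2) *
          ((α - 1) * (2 * t⁻¹ - t⁻¹ ^ 2 - 1) +
            ((α - 1 + (n : ℝ) * α) * t ^ (n + 1) +
              ((n : ℝ) * α ^ 2 - 2 * α + 2 - 2 * (n : ℝ) * α) * t ^ (n + 2) +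
              (α - 1 - (n : ℝ) * α ^ 2 + (n : ℝ) * α) * t ^ (n + 3)) *
              t⁻¹ ^ 3 * (1 - α) ^ n) := by
  have key : α + t⁻¹ - 1 = (α * t + 1 - t) / t := by field_simp
  have hD : α * t + 1 - t ≠ 0 := by
    intro h0
    apply h
    rw [key, h0, zero_div]
  rw [key] at *
  intro n hn
  induction n, hn using Nat.le_induction with
  | base =>
      simp only [Finset.Icc_self, Finset.sum_singleton, Nat.cast_one]
      field_simp
      ring
  | succ n hn ih =>
      rw [Finset.sum_Icc_succ_top (by omega : 1 ≤ n + 1), ih]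
      push_cast
      field_simp
      ring

/-- Proposition 3, complete-rounds part.
Closed form for the total discounted revenue over `n` complete rounds with
constant harvesting share `α`, net growth rate `σ`, round time `θ` and
initial stock `y₀`. -/
theorem total_revenue_closed_form
    (α σ θ y₀ : ℝ) (hσ : σ ≠ 0) (hθ : 0 < θ) (n : ℕ) (hn : 1 ≤ n)
    (h : α + Real.exp (-(σ * θ)) - 1 ≠ 0) :
    ∑ i ∈ Finset.Icc 1 n,
        α * (1 - (i : ℝ) * α) * (1 - α) ^ (i - 1) * (2 * Real.pi * y₀ / (σ * θ)) *
          (Real.exp (σ * θ) - 1) * Real.exp (((i : ℝ) - 1) * σ * θ)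
      = -(2 * Real.pi * y₀ / (σ * θ)) *
          (α / (α + Real.exp (-(σ * θ)) - 1) ^ 2) *
          ((α - 1) * (2 * Real.exp (-(σ * θ)) - Real.exp (-(2 * σ * θ)) - 1) +
            ((α - 1 + (n : ℝ) * α) * Real.exp (σ * θ * ((n : ℝ) + 1)) +
              ((n : ℝ) * α ^ 2 - 2 * α + 2 - 2 * (n : ℝ) * α) *
                Real.exp (σ * θ * ((n : ℝ) + 2)) +
              (α - 1 - (n : ℝ) * α ^ 2 + (n : ℝ) * α) *
                Real.exp (σ * θ * ((n : ℝ) + 3))) *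
              Real.exp (-(3 * σ * θ)) * (1 - α) ^ n) := by
  set t := Real.exp (σ * θ) with hts
  have ht : t ≠ 0 := (Real.exp_pos _).ne'
  rw [Real.exp_neg] at h
  have e1 : Real.exp (-(σ * θ)) = t⁻¹ := Real.exp_neg _
  have e2 : Real.exp (-(2 * σ * θ)) = t⁻¹ ^ 2 := by
    rw [show -(2 * σ * θ) = ((2 : ℕ) : ℝ) * (-(σ * θ)) by push_cast; ring,
      Real.exp_nat_mul, Real.exp_neg]
  have e3 : Real.exp (-(3 * σ * θ)) = t⁻¹ ^ 3 := by
    rw [show -(3 * σ * θ) = ((3 : ℕ) : ℝ) * (-(σ * θ)) by push_cast; ring,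
      Real.exp_nat_mul, Real.exp_neg]
  have e4 : Real.exp (σ * θ * ((n : ℝ) + 1)) = t ^ (n + 1) := by
    rw [show σ * θ * ((n : ℝ) + 1) = ((n + 1 : ℕ) : ℝ) * (σ * θ) by push_cast; ring,
      Real.exp_nat_mul]
  have e5 : Real.exp (σ * θ * ((n : ℝ) + 2)) = t ^ (n + 2) := by
    rw [show σ * θ * ((n : ℝ) + 2) = ((n + 2 : ℕ) : ℝ) * (σ * θ) by push_cast; ring,
      Real.exp_nat_mul]
  have e6 : Real.exp (σ * θ * ((n : ℝ) + 3)) = t ^ (n + 3) := by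
    rw [show σ * θ * ((n : ℝ) + 3) = ((n + 3 : ℕ) : ℝ) * (σ * θ) by push_cast; ring,
      Real.exp_nat_mul]
  rw [e1, e2, e3, e4, e5, e6]
  rw [← aux_sum α (2 * Real.pi * y₀ / (σ * θ)) t ht h n hn]
  refine Finset.sum_congr rfl fun i hi => ?_
  have hi1 : 1 ≤ i := (Finset.mem_Icc.mp hi).1
  have : Real.exp (((i : ℝ) - 1) * σ * θ) = t ^ (i - 1) := by
    rw [show ((i : ℝ) - 1) * σ * θ = ((i - 1 : ℕ) : ℝ) * (σ * θ) by
        push_cast [Nat.cast_sub hi1]; ring,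
      Real.exp_nat_mul]
  rw [this]
end

section
/- Let θ > 0, r, ρ ∈ ℝ, v = 2π/θ, k ∈ ℕ, and T with kθ ≤ T < (k+1)θ; let f₀ : ℝ → ℝ be bounded measurable. Suppose α* : ℝ → ℝ is measurable with 0 ≤ α* ≤ 1 a.e. and maximizes G over all such admissible controls, and let w : ℝ → ℝ be bounded measurable such that 0 ≤ α* + εw ≤ 1 a.e. for all sufficiently small ε > 0. Then Σ_{l=0}^{k−1} ∫_0^{θ} e^{−ρ(t+θl)} [ w(t+θl)(1−2α*(t+θl)) f_l^{α*}(t) + α*(t+θl)(1−α*(t+θl)) z_l(t) ] dt + ∫_0^{T−kθ} e^{−ρ(t+θk)} [ w(t+θk)(1−2α*(t+θk)) f_k^{α*}(t) + α*(t+θk)(1−α*(t+θk)) z_k(t) ] dt ≤ 0, where z_0(t) = 0 and z_{l+1}(t) = e^{rθ}[ −w(t+θl) f_l^{α*}(t) + (1−α*(t+θl)) z_l(t) ]. -/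
open MeasureTheory

/-- The round-`l` density just before harvesting in the spatial harvesting model:
`fDen r θ f₀ α 0 t = e^{rt} f₀(vt)` with speed `v = 2π/θ`, and
`fDen r θ f₀ α (l+1) t = e^{rθ}(1 − α(t+θl)) · fDen r θ f₀ α l t`. -/
noncomputable def fDen (r θ : ℝ) (f₀ α : ℝ → ℝ) : ℕ → ℝ → ℝ
  | 0, t => Real.exp (r * t) * f₀ (2 * Real.pi / θ * t)
  | l + 1, t =>
      Real.exp (r * θ) * (1 - α (t + θ * (l : ℝ))) * fDen r θ f₀ α l t

/-- The sensitivity (Gateaux derivative of the state in direction `w`):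
`z_0 = 0`, `z_{l+1}(t) = e^{rθ}[−w(t+θl) f_l^{α}(t) + (1−α(t+θl)) z_l(t)]`. -/
noncomputable def zSens (r θ : ℝ) (f₀ α w : ℝ → ℝ) : ℕ → ℝ → ℝ
  | 0, _ => 0
  | l + 1, t =>
      Real.exp (r * θ) *
        (-(w (t + θ * (l : ℝ))) * fDen r θ f₀ α l t +
          (1 - α (t + θ * (l : ℝ))) * zSens r θ f₀ α w l t)

/-- The discounted revenue functional
`G(α) = Σ_{l=0}^{k−1} ∫_0^θ e^{−ρ(t+θl)} α(t+θl)(1−α(t+θl)) f_l^{α}(t) dt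
      + ∫_0^{T−kθ} e^{−ρ(t+θk)} α(t+θk)(1−α(t+θk)) f_k^{α}(t) dt`. -/
noncomputable def revenue (r ρ θ T : ℝ) (k : ℕ) (f₀ α : ℝ → ℝ) : ℝ :=
  (∑ l ∈ Finset.range k, ∫ t in (0 : ℝ)..θ,
      Real.exp (-ρ * (t + θ * (l : ℝ))) * α (t + θ * (l : ℝ)) *
        (1 - α (t + θ * (l : ℝ))) * fDen r θ f₀ α l t) +
    ∫ t in (0 : ℝ)..(T - (k : ℝ) * θ),
      Real.exp (-ρ * (t + θ * (k : ℝ))) * α (t + θ * (k : ℝ)) *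
        (1 - α (t + θ * (k : ℝ))) * fDen r θ f₀ α k t

/-- A harvesting-share control is admissible if it is measurable with
`0 ≤ α ≤ 1` almost everywhere. -/
def Admissible (α : ℝ → ℝ) : Prop :=
  Measurable α ∧ ∀ᵐ t : ℝ, 0 ≤ α t ∧ α t ≤ 1

/-!
Perturb the optimal control in the admissible direction, `α_ε = α* + ε w`. Every round density
`f_l^{α_ε}` is a product of factors affine in `ε`, so `f_l^{α_ε} = f_l^{α*} + ε z_l + O(ε²)`, and
the same holds for the round integrands of `G`; all factors are essentially bounded on `(0, θ]`,
so the `O(ε²)` is uniform in `t` (a big-O along `𝓝 0 ×ˢ ae (volume.restrict (Ioc 0 θ))`) and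
survives integration: `G(α_ε) = G(α*) + ε V + O(ε²)`, where `V` is the first variation.
Optimality gives `G(α_ε) ≤ G(α*)` for small `ε > 0`, hence `ε V ≤ C ε²` and `V ≤ 0`.
-/

open Filter Topology Asymptotics Set

theorem Asymptotics.IsBigO.mul_of_isBigO_one {α : Type*} {l : Filter α} {f g h : α → ℝ}
    (hf : f =O[l] (fun _ => (1 : ℝ))) (hg : g =O[l] h) : (fun x => f x * g x) =O[l] h := by
  simpa using hf.mul hg

-- By definition `revenue r ρ θ T k f₀ α = roundSum θ T k (roundRevenue r ρ θ f₀ α)`, and the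
-- first variation in `variational_inequality` is `roundSum θ T k (roundVariation r ρ θ f₀ αs w)`.
noncomputable def roundSum (θ T : ℝ) (k : ℕ) (g : ℕ → ℝ → ℝ) : ℝ :=
  (∑ l ∈ Finset.range k, ∫ t in (0 : ℝ)..θ, g l t) + ∫ t in (0 : ℝ)..(T - k * θ), g k t

noncomputable def roundRevenue (r ρ θ : ℝ) (f₀ α : ℝ → ℝ) (l : ℕ) (t : ℝ) : ℝ :=
  Real.exp (-ρ * (t + θ * l)) * α (t + θ * l) * (1 - α (t + θ * l)) * fDen r θ f₀ α l t

noncomputable def roundVariation (r ρ θ : ℝ) (f₀ α w : ℝ → ℝ) (l : ℕ) (t : ℝ) : ℝ :=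
  Real.exp (-ρ * (t + θ * l)) * (w (t + θ * l) * (1 - 2 * α (t + θ * l)) * fDen r θ f₀ α l t +
    α (t + θ * l) * (1 - α (t + θ * l)) * zSens r θ f₀ α w l t)

section Sensitivity

variable {r θ : ℝ} {f₀ α w : ℝ → ℝ} {L : Filter ℝ}

theorem isBigO_fDen (h₀ : fDen r θ f₀ α 0 =O[L] (fun _ => (1 : ℝ)))
    (hα : ∀ j : ℕ, (fun t => α (t + θ * j)) =O[L] (fun _ => (1 : ℝ))) :
    ∀ l, fDen r θ f₀ α l =O[L] (fun _ => (1 : ℝ))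
  | 0 => h₀
  | l + 1 =>
    (((isBigO_const_one ℝ 1 L).sub (hα l)).mul_of_isBigO_one
      (isBigO_fDen h₀ hα l)).const_mul_left _ |>.congr_left fun t => by
        simp only [fDen]; ring

theorem isBigO_zSens (hf : ∀ l, fDen r θ f₀ α l =O[L] (fun _ => (1 : ℝ)))
    (hα : ∀ j : ℕ, (fun t => α (t + θ * j)) =O[L] (fun _ => (1 : ℝ)))
    (hw : ∀ j : ℕ, (fun t => w (t + θ * j)) =O[L] (fun _ => (1 : ℝ))) :
    ∀ l, zSens r θ f₀ α w l =O[L] (fun _ => (1 : ℝ))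
  | 0 => (isBigO_zero _ _).congr_left fun t => rfl
  | l + 1 =>
    (((hw l).neg_left.mul_of_isBigO_one (hf l)).add
      (((isBigO_const_one ℝ 1 L).sub (hα l)).mul_of_isBigO_one
        (isBigO_zSens hf hα hw l))).const_mul_left (Real.exp (r * θ)) |>.congr_left fun t => by
        simp only [zSens]

theorem isBigO_roundRevenue {ρ : ℝ} {l : ℕ}
    (he : (fun t => Real.exp (-ρ * (t + θ * l))) =O[L] (fun _ => (1 : ℝ)))
    (hf : ∀ l, fDen r θ f₀ α l =O[L] (fun _ => (1 : ℝ)))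
    (hα : ∀ j : ℕ, (fun t => α (t + θ * j)) =O[L] (fun _ => (1 : ℝ))) :
    roundRevenue r ρ θ f₀ α l =O[L] (fun _ => (1 : ℝ)) :=
  he.mul_of_isBigO_one ((hα l).mul_of_isBigO_one
    (((isBigO_const_one ℝ 1 L).sub (hα l)).mul_of_isBigO_one (hf l))) |>.congr_left fun t => by
      simp only [roundRevenue]; ring

theorem isBigO_roundVariation {ρ : ℝ} {l : ℕ}
    (he : (fun t => Real.exp (-ρ * (t + θ * l))) =O[L] (fun _ => (1 : ℝ)))
    (hf : ∀ l, fDen r θ f₀ α l =O[L] (fun _ => (1 : ℝ)))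
    (hz : ∀ l, zSens r θ f₀ α w l =O[L] (fun _ => (1 : ℝ)))
    (hα : ∀ j : ℕ, (fun t => α (t + θ * j)) =O[L] (fun _ => (1 : ℝ)))
    (hw : ∀ j : ℕ, (fun t => w (t + θ * j)) =O[L] (fun _ => (1 : ℝ))) :
    roundVariation r ρ θ f₀ α w l =O[L] (fun _ => (1 : ℝ)) :=
  he.mul_of_isBigO_one (((hw l).mul_of_isBigO_one
    (((isBigO_const_one ℝ 1 L).sub ((hα l).const_mul_left 2)).mul_of_isBigO_one (hf l))).add
    ((hα l).mul_of_isBigO_one (((isBigO_const_one ℝ 1 L).sub (hα l)).mul_of_isBigO_one (hz l))))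
    |>.congr_left fun t => by simp only [roundVariation]; ring

theorem isBigO_fDen_perturb_sub (hf : ∀ l, fDen r θ f₀ α l =O[L] (fun _ => (1 : ℝ)))
    (hz : ∀ l, zSens r θ f₀ α w l =O[L] (fun _ => (1 : ℝ)))
    (hα : ∀ j : ℕ, (fun t => α (t + θ * j)) =O[L] (fun _ => (1 : ℝ)))
    (hw : ∀ j : ℕ, (fun t => w (t + θ * j)) =O[L] (fun _ => (1 : ℝ))) :
    ∀ l, (fun p : ℝ × ℝ => fDen r θ f₀ (fun s => α s + p.1 * w s) l p.2 - fDen r θ f₀ α l p.2 -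
      p.1 * zSens r θ f₀ α w l p.2) =O[𝓝 0 ×ˢ L] (fun p => p.1 ^ 2)
  | 0 => (isBigO_zero _ _).congr_left fun p => by simp [fDen, zSens]
  | l + 1 => by
    have hε : (fun p : ℝ × ℝ => p.1) =O[𝓝 0 ×ˢ L] (fun _ => (1 : ℝ)) := tendsto_fst.isBigO_one ℝ
    have hα' := (hα l).comp_tendsto (tendsto_snd (f := 𝓝 (0 : ℝ)))
    have hw' := (hw l).comp_tendsto (tendsto_snd (f := 𝓝 (0 : ℝ)))
    have hz' := (hz l).comp_tendsto (tendsto_snd (f := 𝓝 (0 : ℝ)))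
    have hfactor := ((isBigO_const_one ℝ 1 _).sub hα').sub (hε.mul_of_isBigO_one hw')
    -- the remainder `R_l = F_l - f_l - ε z_l` satisfies
    -- `R_{l+1} = e^{rθ} ((1 - α - ε w) R_l - ε² w z_l)`
    refine ((hfactor.mul_of_isBigO_one (isBigO_fDen_perturb_sub hf hz hα hw l)).sub
      ((hw'.mul_of_isBigO_one hz').mul_of_isBigO_one (isBigO_refl _ _)))
      |>.const_mul_left (Real.exp (r * θ)) |>.congr_left fun p => ?_
    simp only [fDen, zSens, Function.comp]
    ring

theorem isBigO_roundRevenue_perturb_sub {ρ : ℝ} {l : ℕ}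
    (he : (fun t => Real.exp (-ρ * (t + θ * l))) =O[L] (fun _ => (1 : ℝ)))
    (hf : ∀ l, fDen r θ f₀ α l =O[L] (fun _ => (1 : ℝ)))
    (hz : ∀ l, zSens r θ f₀ α w l =O[L] (fun _ => (1 : ℝ)))
    (hα : ∀ j : ℕ, (fun t => α (t + θ * j)) =O[L] (fun _ => (1 : ℝ)))
    (hw : ∀ j : ℕ, (fun t => w (t + θ * j)) =O[L] (fun _ => (1 : ℝ))) :
    (fun p : ℝ × ℝ => roundRevenue r ρ θ f₀ (fun s => α s + p.1 * w s) l p.2 -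
      roundRevenue r ρ θ f₀ α l p.2 - p.1 * roundVariation r ρ θ f₀ α w l p.2)
      =O[𝓝 0 ×ˢ L] (fun p => p.1 ^ 2) := by
  have hε : (fun p : ℝ × ℝ => p.1) =O[𝓝 0 ×ˢ L] (fun _ => (1 : ℝ)) := tendsto_fst.isBigO_one ℝ
  have hε2 : (fun p : ℝ × ℝ => p.1 ^ 2) =O[𝓝 0 ×ˢ L] (fun _ => (1 : ℝ)) :=
    ((continuous_pow 2).tendsto' 0 0 (by simp)).comp tendsto_fst |>.isBigO_one ℝ
  have he' := he.comp_tendsto (tendsto_snd (f := 𝓝 (0 : ℝ)))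
  have hα' := (hα l).comp_tendsto (tendsto_snd (f := 𝓝 (0 : ℝ)))
  have hw' := (hw l).comp_tendsto (tendsto_snd (f := 𝓝 (0 : ℝ)))
  have hf' := (hf l).comp_tendsto (tendsto_snd (f := 𝓝 (0 : ℝ)))
  have hz' := (hz l).comp_tendsto (tendsto_snd (f := 𝓝 (0 : ℝ)))
  have hR := isBigO_fDen_perturb_sub hf hz hα hw l
  have hF : (fun p : ℝ × ℝ => fDen r θ f₀ (fun s => α s + p.1 * w s) l p.2)
      =O[𝓝 0 ×ˢ L] (fun _ => (1 : ℝ)) :=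
    ((hf'.add (hε.mul_of_isBigO_one hz')).add (hR.trans hε2)).congr_left fun p => by
      simp only [Function.comp]; ring
  -- with `q(ε) = (α + ε w)(1 - α - ε w) = q₀ + ε q₁ - ε² w²` the remainder of the integrand is
  -- `e^{-ρs} ((q₀ + ε q₁) R + ε² (q₁ z - w² F))`, where `R = F - f - ε z`
  have hq₀ := hα'.mul_of_isBigO_one ((isBigO_const_one ℝ 1 _).sub hα')
  have hq₁ := hw'.mul_of_isBigO_one ((isBigO_const_one ℝ 1 _).sub (hα'.const_mul_left 2))
  refine he'.mul_of_isBigO_one (((hq₀.add (hε.mul_of_isBigO_one hq₁)).mul_of_isBigO_one hR).add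
      (((hq₁.mul_of_isBigO_one hz').sub ((hw'.mul_of_isBigO_one hw').mul_of_isBigO_one hF))
        |>.mul_of_isBigO_one (isBigO_refl _ _))) |>.congr_left fun p => ?_
  simp only [roundRevenue, roundVariation, Function.comp]
  ring

end Sensitivity

section Integration

theorem Asymptotics.IsBigO.integral {α X : Type*} [MeasurableSpace X] {μ : Measure X}
    [IsFiniteMeasure μ] {l : Filter α} {g : α → X → ℝ} {φ : α → ℝ}
    (h : (fun p : α × X => g p.1 p.2) =O[l ×ˢ ae μ] (fun p => φ p.1)) :
    (fun a => ∫ x, g a x ∂μ) =O[l] φ := by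
  obtain ⟨C, hC⟩ := h.bound
  refine IsBigO.of_bound (C * μ.real univ) (hC.curry.mono fun a ha => ?_)
  calc ‖∫ x, g a x ∂μ‖ ≤ C * ‖φ a‖ * μ.real univ := norm_integral_le_of_norm_le_const ha
    _ = C * μ.real univ * ‖φ a‖ := by ring

theorem Asymptotics.IsBigO.intervalIntegral {α : Type*} {l : Filter α} {g : α → ℝ → ℝ}
    {φ : α → ℝ} {B θ : ℝ} (hB : 0 ≤ B) (hBθ : B ≤ θ)
    (h : (fun p : α × ℝ => g p.1 p.2) =O[l ×ˢ ae (volume.restrict (Ioc 0 θ))]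
      (fun p => φ p.1)) :
    (fun a => ∫ t in (0 : ℝ)..B, g a t) =O[l] φ := by
  simp_rw [intervalIntegral.integral_of_le hB]
  exact (h.mono (prod_mono le_rfl
    (ae_mono (Measure.restrict_mono (Ioc_subset_Ioc_right hBθ) le_rfl)))).integral

theorem MeasureTheory.Integrable.of_isBigO_one {X : Type*} [MeasurableSpace X] {μ : Measure X}
    [IsFiniteMeasure μ] {g : X → ℝ} (hm : AEStronglyMeasurable g μ)
    (h : g =O[ae μ] (fun _ => (1 : ℝ))) : Integrable g μ := by
  obtain ⟨C, hC⟩ := h.bound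
  exact Integrable.of_bound hm C (hC.mono fun x hx => by simpa using hx)

end Integration
section RoundSum

variable {θ T : ℝ} {k : ℕ}

theorem roundSum_sub_sub_mul (hT : 0 ≤ T - k * θ) (hTθ : T - k * θ ≤ θ)
    {g₁ g₂ g₃ : ℕ → ℝ → ℝ} (h₁ : ∀ l, IntervalIntegrable (g₁ l) volume 0 θ)
    (h₂ : ∀ l, IntervalIntegrable (g₂ l) volume 0 θ)
    (h₃ : ∀ l, IntervalIntegrable (g₃ l) volume 0 θ) (c : ℝ) :
    roundSum θ T k (fun l t => g₁ l t - g₂ l t - c * g₃ l t) =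
      roundSum θ T k g₁ - roundSum θ T k g₂ - c * roundSum θ T k g₃ := by
  have split : ∀ B, 0 ≤ B → B ≤ θ → ∀ l, ∫ t in (0 : ℝ)..B, (g₁ l t - g₂ l t - c * g₃ l t) =
      (∫ t in (0 : ℝ)..B, g₁ l t) - (∫ t in (0 : ℝ)..B, g₂ l t) -
        c * ∫ t in (0 : ℝ)..B, g₃ l t := by
    intro B hB hBθ l
    have restrict : ∀ g : ℝ → ℝ, IntervalIntegrable g volume 0 θ →
        IntervalIntegrable g volume 0 B := fun g hg =>
      hg.mono_set (uIcc_subset_uIcc_left (mem_uIcc_of_le hB hBθ))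
    rw [intervalIntegral.integral_sub ((restrict _ (h₁ l)).sub (restrict _ (h₂ l)))
      ((restrict _ (h₃ l)).const_mul c), intervalIntegral.integral_sub (restrict _ (h₁ l))
      (restrict _ (h₂ l)), intervalIntegral.integral_const_mul]
  simp only [roundSum, split θ (hT.trans hTθ) le_rfl, split _ hT hTθ, Finset.sum_sub_distrib,
    ← Finset.mul_sum]
  ring

theorem isBigO_roundSum {α : Type*} {l : Filter α} {g : α → ℕ → ℝ → ℝ}
    {φ : α → ℝ} (hT : 0 ≤ T - k * θ) (hTθ : T - k * θ ≤ θ)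
    (h : ∀ j, (fun p : α × ℝ => g p.1 j p.2) =O[l ×ˢ ae (volume.restrict (Ioc 0 θ))]
      (fun p => φ p.1)) :
    (fun a => roundSum θ T k (g a)) =O[l] φ :=
  (IsBigO.fun_sum fun j _ => (h j).intervalIntegral (hT.trans hTθ) le_rfl).add
    ((h k).intervalIntegral hT hTθ)

end RoundSum

section Model

variable {r ρ θ M A W : ℝ} {f₀ α w : ℝ → ℝ}

theorem measurable_fDen (hf₀ : Measurable f₀) (hα : Measurable α) :
    ∀ l, Measurable (fDen r θ f₀ α l)
  | 0 => (by fun_prop : Measurable fun t => Real.exp (r * t) * f₀ (2 * Real.pi / θ * t))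
  | l + 1 => by
    have : Measurable (fDen r θ f₀ α l) := measurable_fDen hf₀ hα l
    exact (by fun_prop :
      Measurable fun t => Real.exp (r * θ) * (1 - α (t + θ * l)) * fDen r θ f₀ α l t)

theorem measurable_zSens (hf₀ : Measurable f₀) (hα : Measurable α) (hw : Measurable w) :
    ∀ l, Measurable (zSens r θ f₀ α w l)
  | 0 => measurable_const
  | l + 1 => by
    have : Measurable (fDen r θ f₀ α l) := measurable_fDen hf₀ hα l
    have : Measurable (zSens r θ f₀ α w l) := measurable_zSens hf₀ hα hw l
    exact (by fun_prop : Measurable fun t => Real.exp (r * θ) *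
      (-(w (t + θ * l)) * fDen r θ f₀ α l t + (1 - α (t + θ * l)) * zSens r θ f₀ α w l t))

theorem measurable_roundRevenue (hf₀ : Measurable f₀) (hα : Measurable α) (l : ℕ) :
    Measurable (roundRevenue r ρ θ f₀ α l) := by
  have := measurable_fDen (r := r) (θ := θ) hf₀ hα l
  unfold roundRevenue
  fun_prop

theorem measurable_roundVariation (hf₀ : Measurable f₀) (hα : Measurable α) (hw : Measurable w)
    (l : ℕ) : Measurable (roundVariation r ρ θ f₀ α w l) := by
  have := measurable_fDen (r := r) (θ := θ) hf₀ hα l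
  have := measurable_zSens (r := r) (θ := θ) hf₀ hα hw l
  unfold roundVariation
  fun_prop

theorem Continuous.isBigO_one_ae_Ioc {h : ℝ → ℝ} (hh : Continuous h) (a b : ℝ) :
    h =O[ae (volume.restrict (Ioc a b))] (fun _ => (1 : ℝ)) := by
  obtain ⟨C, hC⟩ := (isCompact_Icc (a := a) (b := b)).exists_bound_of_continuousOn hh.continuousOn
  exact IsBigO.of_bound C ((ae_restrict_mem measurableSet_Ioc).mono fun t ht => by
    simpa using hC t (Ioc_subset_Icc_self ht))

theorem isBigO_comp_add_const_of_ae_bound {g : ℝ → ℝ} {C : ℝ} (h : ∀ᵐ x, |g x| ≤ C) (c : ℝ)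
    (s : Set ℝ) : (fun t => g (t + c)) =O[ae (volume.restrict s)] (fun _ => (1 : ℝ)) := by
  have hc : ∀ᵐ t, |g (t + c)| ≤ C :=
    (measurePreserving_add_right volume c).quasiMeasurePreserving.ae h
  exact IsBigO.of_bound C ((ae_restrict_of_ae hc).mono fun t ht => by simpa using ht)

theorem isBigO_fDen_of_ae_bound (hf₀ : ∀ x, |f₀ x| ≤ M) (hα : ∀ᵐ x, |α x| ≤ A) :
    ∀ l, fDen r θ f₀ α l =O[ae (volume.restrict (Ioc 0 θ))] (fun _ => (1 : ℝ)) :=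
  isBigO_fDen ((Continuous.isBigO_one_ae_Ioc (by fun_prop) 0 θ).mul_of_isBigO_one
    (IsBigO.of_bound M (Eventually.of_forall fun x => by simpa using hf₀ _)))
    fun j => isBigO_comp_add_const_of_ae_bound hα _ _

theorem isBigO_revenue_perturb_sub {T : ℝ} {k : ℕ} (hT : 0 ≤ T - k * θ) (hTθ : T - k * θ ≤ θ)
    (hf₀ : Measurable f₀) (hf₀b : ∀ x, |f₀ x| ≤ M) (hα : Measurable α) (hαb : ∀ᵐ x, |α x| ≤ A)
    (hw : Measurable w) (hwb : ∀ x, |w x| ≤ W) :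
    (fun ε => revenue r ρ θ T k f₀ (fun s => α s + ε * w s) - revenue r ρ θ T k f₀ α -
      ε * roundSum θ T k (roundVariation r ρ θ f₀ α w)) =O[𝓝 0] (fun ε => ε ^ 2) := by
  have he : ∀ l : ℕ, (fun t => Real.exp (-ρ * (t + θ * l)))
      =O[ae (volume.restrict (Ioc 0 θ))] (fun _ => (1 : ℝ)) := fun l =>
    Continuous.isBigO_one_ae_Ioc (by fun_prop) 0 θ
  have hαL := fun j : ℕ => isBigO_comp_add_const_of_ae_bound hαb (θ * j) (Ioc 0 θ)
  have hwL := fun j : ℕ =>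
    isBigO_comp_add_const_of_ae_bound (Eventually.of_forall hwb) (θ * j) (Ioc 0 θ)
  have hf := isBigO_fDen_of_ae_bound (r := r) (θ := θ) hf₀b hαb
  have hz := isBigO_zSens hf hαL hwL
  have integrable : ∀ g : ℝ → ℝ, Measurable g →
      g =O[ae (volume.restrict (Ioc 0 θ))] (fun _ => (1 : ℝ)) →
      IntervalIntegrable g volume 0 θ := fun g hm hg =>
    (intervalIntegrable_iff_integrableOn_Ioc_of_le (hT.trans hTθ)).2
      (.of_isBigO_one hm.aestronglyMeasurable hg)
  refine (isBigO_roundSum (g := fun ε l t => roundRevenue r ρ θ f₀ (fun s => α s + ε * w s) l t -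
      roundRevenue r ρ θ f₀ α l t - ε * roundVariation r ρ θ f₀ α w l t) hT hTθ fun l =>
    isBigO_roundRevenue_perturb_sub (he l) hf hz hαL hwL).congr_left fun ε => ?_
  have hαε : ∀ᵐ x, |α x + ε * w x| ≤ A + |ε| * W := hαb.mono fun x hx =>
    (abs_add_le _ _).trans (add_le_add hx (by
      rw [abs_mul]; exact mul_le_mul_of_nonneg_left (hwb x) (abs_nonneg ε)))
  exact roundSum_sub_sub_mul hT hTθ
    (fun l => integrable _ (measurable_roundRevenue hf₀ (hα.add (hw.const_mul ε)) l)
      (isBigO_roundRevenue (he l) (isBigO_fDen_of_ae_bound hf₀b hαε)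
        fun j => isBigO_comp_add_const_of_ae_bound hαε _ _))
    (fun l => integrable _ (measurable_roundRevenue hf₀ hα l) (isBigO_roundRevenue (he l) hf hαL))
    (fun l => integrable _ (measurable_roundVariation hf₀ hα hw l)
      (isBigO_roundVariation (he l) hf hz hαL hwL)) ε

end Model

theorem nonpos_of_isBigO_sq {φ : ℝ → ℝ} {c V : ℝ}
    (hφ : (fun ε => φ ε - c - ε * V) =O[𝓝 0] (fun ε => ε ^ 2))
    (hmax : ∀ᶠ ε in 𝓝[>] 0, φ ε ≤ c) : V ≤ 0 := by
  obtain ⟨C, hC⟩ := hφ.bound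
  have hV : ∀ᶠ ε in 𝓝[>] 0, V ≤ C * ε := by
    filter_upwards [nhdsWithin_le_nhds hC, hmax, self_mem_nhdsWithin] with ε hCε hε hmem
    rw [Real.norm_eq_abs, Real.norm_eq_abs, abs_of_nonneg (sq_nonneg ε)] at hCε
    have hlower := (abs_le.1 hCε).1
    have hpos : (0 : ℝ) < ε := hmem
    nlinarith
  have hlim : Tendsto (fun ε => C * ε) (𝓝[>] 0) (𝓝 0) := by
    simpa using ((continuous_const_mul C).tendsto 0).mono_left nhdsWithin_le_nhds
  exact ge_of_tendsto hlim hV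

theorem variational_inequality_general
    (θ : ℝ) (r ρ : ℝ) (k : ℕ) (T : ℝ)
    (hT₁ : (k : ℝ) * θ ≤ T) (hT₂ : T < ((k : ℝ) + 1) * θ)
    (f₀ : ℝ → ℝ) (hf₀m : Measurable f₀) (hf₀b : ∃ M, ∀ x, |f₀ x| ≤ M)
    (αs : ℝ → ℝ) (hαs : Admissible αs)
    (hopt : ∀ α : ℝ → ℝ, Admissible α →
      revenue r ρ θ T k f₀ α ≤ revenue r ρ θ T k f₀ αs)
    (w : ℝ → ℝ) (hwm : Measurable w) (hwb : ∃ M, ∀ x, |w x| ≤ M)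
    (hpert : ∃ ε₀ > (0 : ℝ), ∀ ε : ℝ, 0 < ε → ε ≤ ε₀ →
      ∀ᵐ t : ℝ, 0 ≤ αs t + ε * w t ∧ αs t + ε * w t ≤ 1) :
    (∑ l ∈ Finset.range k, ∫ t in (0 : ℝ)..θ,
        Real.exp (-ρ * (t + θ * (l : ℝ))) *
          (w (t + θ * (l : ℝ)) * (1 - 2 * αs (t + θ * (l : ℝ))) * fDen r θ f₀ αs l t +
            αs (t + θ * (l : ℝ)) * (1 - αs (t + θ * (l : ℝ))) * zSens r θ f₀ αs w l t)) +
      (∫ t in (0 : ℝ)..(T - (k : ℝ) * θ),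
        Real.exp (-ρ * (t + θ * (k : ℝ))) *
          (w (t + θ * (k : ℝ)) * (1 - 2 * αs (t + θ * (k : ℝ))) * fDen r θ f₀ αs k t +
            αs (t + θ * (k : ℝ)) * (1 - αs (t + θ * (k : ℝ))) * zSens r θ f₀ αs w k t))
      ≤ 0 := by
  obtain ⟨M, hM⟩ := hf₀b
  obtain ⟨W, hW⟩ := hwb
  obtain ⟨ε₀, hε₀, hpert⟩ := hpert
  have hαb : ∀ᵐ x, |αs x| ≤ 1 := hαs.2.mono fun x hx => abs_le.2 ⟨by linarith [hx.1], hx.2⟩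
  refine nonpos_of_isBigO_sq (isBigO_revenue_perturb_sub (by linarith) (by linarith)
    hf₀m hM hαs.1 hαb hwm hW) ?_
  filter_upwards [Ioc_mem_nhdsGT hε₀] with ε hε
  exact hopt _ ⟨hαs.1.add (hwm.const_mul ε), hpert ε hε.1 hε.2⟩

/-- Lemma 1: first-order variational inequality without impulses.
If `α*` maximizes the revenue functional over admissible controls and `w` is an
admissible perturbation direction, then the first variation is nonpositive. -/
theorem variational_inequality
    (θ : ℝ) (hθ : 0 < θ) (r ρ : ℝ) (k : ℕ) (T : ℝ)
    (hT₁ : (k : ℝ) * θ ≤ T) (hT₂ : T < ((k : ℝ) + 1) * θ)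
    (f₀ : ℝ → ℝ) (hf₀m : Measurable f₀) (hf₀b : ∃ M, ∀ x, |f₀ x| ≤ M)
    (αs : ℝ → ℝ) (hαs : Admissible αs)
    (hopt : ∀ α : ℝ → ℝ, Admissible α →
      revenue r ρ θ T k f₀ α ≤ revenue r ρ θ T k f₀ αs)
    (w : ℝ → ℝ) (hwm : Measurable w) (hwb : ∃ M, ∀ x, |w x| ≤ M)
    (hpert : ∃ ε₀ > (0 : ℝ), ∀ ε : ℝ, 0 < ε → ε ≤ ε₀ →
      ∀ᵐ t : ℝ, 0 ≤ αs t + ε * w t ∧ αs t + ε * w t ≤ 1) :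
    (∑ l ∈ Finset.range k, ∫ t in (0 : ℝ)..θ,
        Real.exp (-ρ * (t + θ * (l : ℝ))) *
          (w (t + θ * (l : ℝ)) * (1 - 2 * αs (t + θ * (l : ℝ))) * fDen r θ f₀ αs l t +
            αs (t + θ * (l : ℝ)) * (1 - αs (t + θ * (l : ℝ))) * zSens r θ f₀ αs w l t)) +
      (∫ t in (0 : ℝ)..(T - (k : ℝ) * θ),
        Real.exp (-ρ * (t + θ * (k : ℝ))) *
          (w (t + θ * (k : ℝ)) * (1 - 2 * αs (t + θ * (k : ℝ))) * fDen r θ f₀ αs k t +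
            αs (t + θ * (k : ℝ)) * (1 - αs (t + θ * (k : ℝ))) * zSens r θ f₀ αs w k t))
      ≤ 0 :=
  variational_inequality_general θ r ρ k T hT₁ hT₂ f₀ hf₀m hf₀b αs hαs hopt w hwm hwb hpert
end

section
/- Let θ > 0, r, ρ ∈ ℝ, v = 2π/θ, k ∈ ℕ, T with kθ ≤ T < (k+1)θ, f₀ : ℝ → ℝ bounded measurable, and α*, w : ℝ → ℝ bounded measurable. Let f_l^{α*}, z_l be as in the recursions below, and let p_l : [0,θ) → ℝ be defined backwards by p_k(t) = e^{−ρ(t+θk)} α*(t+θk)(1−α*(t+θk)) for t ∈ [0, T−θk) and p_k(t) = 0 for t ∈ [T−θk, θ), and p_l(t) = e^{rθ}(1−α*(t+θl)) p_{l+1}(t) + e^{−ρ(t+θl)} α*(t+θl)(1−α*(t+θl)) for l = 0,…,k−1. Then the duality identity holds: Σ_{l=0}^{k−1} ∫_0^{θ} e^{−ρ(t+θl)} α*(t+θl)(1−α*(t+θl)) z_l(t) dt + ∫_0^{T−kθ} e^{−ρ(t+θk)} α*(t+θk)(1−α*(t+θk)) z_k(t) dt = −Σ_{l=0}^{k−1}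 ∫_0^{θ} e^{rθ} w(t+θl) f_l^{α*}(t) p_{l+1}(t) dt. -/
open MeasureTheory

/-- bounded on compact intervals -/
def BddIcc (f : ℝ → ℝ) : Prop := ∀ a b : ℝ, ∃ C, ∀ t ∈ Set.Icc a b, |f t| ≤ C

lemma BddIcc.mul {f g : ℝ → ℝ} (hf : BddIcc f) (hg : BddIcc g) :
    BddIcc (fun t => f t * g t) := by
  intro a b
  obtain ⟨C, hC⟩ := hf a b; obtain ⟨D, hD⟩ := hg a b
  refine ⟨|C| * |D|, fun t ht => ?_⟩
  rw [abs_mul]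
  exact mul_le_mul ((hC t ht).trans (le_abs_self C)) ((hD t ht).trans (le_abs_self D))
    (abs_nonneg _) (abs_nonneg _)

lemma BddIcc.add {f g : ℝ → ℝ} (hf : BddIcc f) (hg : BddIcc g) :
    BddIcc (fun t => f t + g t) := by
  intro a b
  obtain ⟨C, hC⟩ := hf a b; obtain ⟨D, hD⟩ := hg a b
  exact ⟨C + D, fun t ht => (abs_add_le _ _).trans (add_le_add (hC t ht) (hD t ht))⟩

lemma BddIcc.of_glob {f : ℝ → ℝ} (hf : ∃ M, ∀ x, |f x| ≤ M) (e : ℝ → ℝ) :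
    BddIcc (fun t => f (e t)) := by
  obtain ⟨M, hM⟩ := hf
  exact fun a b => ⟨M, fun t _ => hM _⟩

lemma BddIcc.of_continuous {f : ℝ → ℝ} (hf : Continuous f) : BddIcc f := by
  intro a b
  obtain ⟨C, hC⟩ := (isCompact_Icc (a := a) (b := b)).exists_bound_of_continuousOn
    hf.continuousOn
  exact ⟨C, fun t ht => hC t ht⟩

lemma BddIcc.const (c : ℝ) : BddIcc (fun _ => c) := fun a b => ⟨|c|, fun _ _ => le_rfl⟩

lemma BddIcc.intervalIntegrable {f : ℝ → ℝ} (hm : Measurable f) (hb : BddIcc f)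
    (a b : ℝ) : IntervalIntegrable f volume a b := by
  obtain ⟨C, hC⟩ := hb (min a b) (max a b)
  rw [intervalIntegrable_iff]
  have hsub : Set.uIoc a b ⊆ Set.Icc (min a b) (max a b) := by
    rw [Set.uIoc]; exact Set.Ioc_subset_Icc_self
  refine Integrable.mono' (g := fun _ => C) (intervalIntegrable_iff.mp intervalIntegrable_const)
    hm.aestronglyMeasurable.restrict ?_
  filter_upwards [ae_restrict_mem measurableSet_uIoc] with t ht
  exact hC t (hsub ht)

lemma BddIcc.neg {f : ℝ → ℝ} (hf : BddIcc f) : BddIcc (fun t => -f t) := by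
  intro a b; obtain ⟨C, hC⟩ := hf a b
  exact ⟨C, fun t ht => (abs_neg (f t)) ▸ hC t ht⟩

lemma BddIcc.sub {f g : ℝ → ℝ} (hf : BddIcc f) (hg : BddIcc g) :
    BddIcc (fun t => f t - g t) := by
  simpa [sub_eq_add_neg] using hf.add hg.neg


/-- the discount-times-harvest weight -/
noncomputable def qWt (ρ θ : ℝ) (αs : ℝ → ℝ) (l : ℕ) (t : ℝ) : ℝ :=
  Real.exp (-ρ * (t + θ * (l : ℝ))) * αs (t + θ * (l : ℝ)) * (1 - αs (t + θ * (l : ℝ)))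

/-- adjoint state, counted backwards: `adjAux j` is the adjoint at round `k - j`. -/
noncomputable def adjAux (r ρ θ T : ℝ) (αs : ℝ → ℝ) (k : ℕ) : ℕ → ℝ → ℝ
  | 0, t => if t < T - θ * (k : ℝ) then qWt ρ θ αs k t else 0
  | j + 1, t =>
      Real.exp (r * θ) * (1 - αs (t + θ * ((k - (j + 1) : ℕ) : ℝ))) *
        adjAux r ρ θ T αs k j t + qWt ρ θ αs (k - (j + 1)) t

/-- adjoint state at round `l`. -/
noncomputable def adjP (r ρ θ T : ℝ) (αs : ℝ → ℝ) (k l : ℕ) : ℝ → ℝ :=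
  adjAux r ρ θ T αs k (k - l)

lemma adjP_rec (r ρ θ T : ℝ) (αs : ℝ → ℝ) (k l : ℕ) (hl : l < k) (t : ℝ) :
    adjP r ρ θ T αs k l t =
      Real.exp (r * θ) * (1 - αs (t + θ * (l : ℝ))) * adjP r ρ θ T αs k (l + 1) t +
        qWt ρ θ αs l t := by
  have h1 : k - l = (k - (l + 1)) + 1 := by omega
  have h2 : k - ((k - (l + 1)) + 1) = l := by omega
  rw [adjP, adjP, h1, adjAux, h2]

lemma adjP_top (r ρ θ T : ℝ) (αs : ℝ → ℝ) (k : ℕ) (t : ℝ) :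
    adjP r ρ θ T αs k k t = if t < T - θ * (k : ℝ) then qWt ρ θ αs k t else 0 := by
  rw [adjP, Nat.sub_self, adjAux]

lemma qWt_meas {ρ θ : ℝ} {αs : ℝ → ℝ} (hαm : Measurable αs) (l : ℕ) :
    Measurable (qWt ρ θ αs l) := by
  unfold qWt; fun_prop

lemma qWt_bdd (ρ θ : ℝ) {αs : ℝ → ℝ} (hαb : ∃ M, ∀ x, |αs x| ≤ M) (l : ℕ) :
    BddIcc (qWt ρ θ αs l) := by
  unfold qWt
  exact BddIcc.mul
    (BddIcc.mul (.of_continuous (by continuity)) (.of_glob hαb _))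
    (BddIcc.sub (.const 1) (.of_glob hαb _))

lemma fDen_meas {r θ : ℝ} {f₀ αs : ℝ → ℝ} (hf₀m : Measurable f₀) (hαm : Measurable αs)
    (l : ℕ) : Measurable (fDen r θ f₀ αs l) := by
  induction l with
  | zero =>
    show Measurable fun t => Real.exp (r * t) * f₀ (2 * Real.pi / θ * t)
    fun_prop
  | succ n ih =>
    show Measurable fun t =>
      Real.exp (r * θ) * (1 - αs (t + θ * (n : ℝ))) * fDen r θ f₀ αs n t
    fun_prop

lemma fDen_bdd (r θ : ℝ) {f₀ αs : ℝ → ℝ} (hf₀b : ∃ M, ∀ x, |f₀ x| ≤ M)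
    (hαb : ∃ M, ∀ x, |αs x| ≤ M) (l : ℕ) : BddIcc (fDen r θ f₀ αs l) := by
  induction l with
  | zero =>
    show BddIcc fun t => Real.exp (r * t) * f₀ (2 * Real.pi / θ * t)
    exact BddIcc.mul (.of_continuous (by continuity)) (.of_glob hf₀b _)
  | succ n ih =>
    show BddIcc fun t =>
      Real.exp (r * θ) * (1 - αs (t + θ * (n : ℝ))) * fDen r θ f₀ αs n t
    exact BddIcc.mul (BddIcc.mul (.const _) (BddIcc.sub (.const 1) (.of_glob hαb _))) ih

lemma zSens_meas {r θ : ℝ} {f₀ αs w : ℝ → ℝ} (hf₀m : Measurable f₀)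
    (hαm : Measurable αs) (hwm : Measurable w) (l : ℕ) :
    Measurable (zSens r θ f₀ αs w l) := by
  induction l with
  | zero => show Measurable fun _ : ℝ => (0 : ℝ); fun_prop
  | succ n ih =>
    show Measurable fun t => Real.exp (r * θ) *
      (-(w (t + θ * (n : ℝ))) * fDen r θ f₀ αs n t +
        (1 - αs (t + θ * (n : ℝ))) * zSens r θ f₀ αs w n t)
    have := fDen_meas (r := r) (θ := θ) hf₀m hαm n
    fun_prop

lemma zSens_bdd (r θ : ℝ) {f₀ αs w : ℝ → ℝ} (hf₀b : ∃ M, ∀ x, |f₀ x| ≤ M)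
    (hαb : ∃ M, ∀ x, |αs x| ≤ M) (hwb : ∃ M, ∀ x, |w x| ≤ M) (l : ℕ) :
    BddIcc (zSens r θ f₀ αs w l) := by
  induction l with
  | zero => exact .const 0
  | succ n ih =>
    show BddIcc fun t => Real.exp (r * θ) *
      (-(w (t + θ * (n : ℝ))) * fDen r θ f₀ αs n t +
        (1 - αs (t + θ * (n : ℝ))) * zSens r θ f₀ αs w n t)
    exact BddIcc.mul (.const _)
      (BddIcc.add (BddIcc.mul (BddIcc.neg (.of_glob hwb _)) (fDen_bdd r θ hf₀b hαb n))
        (BddIcc.mul (BddIcc.sub (.const 1) (.of_glob hαb _)) ih))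

lemma adjAux_meas {r ρ θ T : ℝ} {αs : ℝ → ℝ} (hαm : Measurable αs) (k j : ℕ) :
    Measurable (adjAux r ρ θ T αs k j) := by
  induction j with
  | zero =>
    show Measurable fun t => if t < T - θ * (k : ℝ) then qWt ρ θ αs k t else 0
    exact Measurable.ite (measurableSet_lt measurable_id measurable_const)
      (qWt_meas hαm k) measurable_const
  | succ n ih =>
    show Measurable fun t =>
      Real.exp (r * θ) * (1 - αs (t + θ * ((k - (n + 1) : ℕ) : ℝ))) *
        adjAux r ρ θ T αs k n t + qWt ρ θ αs (k - (n + 1)) t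
    have := qWt_meas (ρ := ρ) (θ := θ) hαm (k - (n + 1))
    fun_prop

lemma adjAux_bdd (r ρ θ T : ℝ) {αs : ℝ → ℝ} (hαb : ∃ M, ∀ x, |αs x| ≤ M) (k j : ℕ) :
    BddIcc (adjAux r ρ θ T αs k j) := by
  induction j with
  | zero =>
    intro a b
    obtain ⟨C, hC⟩ := qWt_bdd ρ θ hαb k a b
    refine ⟨max C 0, fun t ht => ?_⟩
    show |if t < T - θ * (k : ℝ) then qWt ρ θ αs k t else 0| ≤ max C 0
    split
    · exact (hC t ht).trans (le_max_left _ _)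
    · simp
  | succ n ih =>
    show BddIcc fun t =>
      Real.exp (r * θ) * (1 - αs (t + θ * ((k - (n + 1) : ℕ) : ℝ))) *
        adjAux r ρ θ T αs k n t + qWt ρ θ αs (k - (n + 1)) t
    exact BddIcc.add (BddIcc.mul (BddIcc.mul (.const _)
      (BddIcc.sub (.const 1) (.of_glob hαb _))) ih) (qWt_bdd ρ θ hαb _)

lemma adjP_meas {r ρ θ T : ℝ} {αs : ℝ → ℝ} (hαm : Measurable αs) (k l : ℕ) :
    Measurable (adjP r ρ θ T αs k l) := adjAux_meas hαm k _

lemma adjP_bdd (r ρ θ T : ℝ) {αs : ℝ → ℝ} (hαb : ∃ M, ∀ x, |αs x| ≤ M) (k l : ℕ) :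
    BddIcc (adjP r ρ θ T αs k l) := adjAux_bdd r ρ θ T hαb k _

/-- summation-by-parts duality identity (s) from the proof of
Proposition 2. With the adjoint states `p_l` defined backwards from the final
round, the weighted sum of the sensitivities equals the adjoint pairing with
the perturbation direction. -/
theorem duality_identity
    (θ : ℝ) (hθ : 0 < θ) (r ρ : ℝ) (k : ℕ) (T : ℝ)
    (hT₁ : (k : ℝ) * θ ≤ T) (hT₂ : T < ((k : ℝ) + 1) * θ)
    (f₀ : ℝ → ℝ) (hf₀m : Measurable f₀) (hf₀b : ∃ M, ∀ x, |f₀ x| ≤ M)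
    (αs : ℝ → ℝ) (hαm : Measurable αs) (hαb : ∃ M, ∀ x, |αs x| ≤ M)
    (w : ℝ → ℝ) (hwm : Measurable w) (hwb : ∃ M, ∀ x, |w x| ≤ M)
    (p : ℕ → ℝ → ℝ)
    (hpk₁ : ∀ t : ℝ, 0 ≤ t → t < T - θ * (k : ℝ) →
      p k t = Real.exp (-ρ * (t + θ * (k : ℝ))) * αs (t + θ * (k : ℝ)) *
        (1 - αs (t + θ * (k : ℝ))))
    (hpk₂ : ∀ t : ℝ, T - θ * (k : ℝ) ≤ t → t < θ → p k t = 0)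
    (hpl : ∀ l < k, ∀ t ∈ Set.Ico (0 : ℝ) θ,
      p l t = Real.exp (r * θ) * (1 - αs (t + θ * (l : ℝ))) * p (l + 1) t +
        Real.exp (-ρ * (t + θ * (l : ℝ))) * αs (t + θ * (l : ℝ)) *
          (1 - αs (t + θ * (l : ℝ)))) :
    (∑ l ∈ Finset.range k, ∫ t in (0 : ℝ)..θ,
        Real.exp (-ρ * (t + θ * (l : ℝ))) * αs (t + θ * (l : ℝ)) *
          (1 - αs (t + θ * (l : ℝ))) * zSens r θ f₀ αs w l t) +
      (∫ t in (0 : ℝ)..(T - (k : ℝ) * θ),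
        Real.exp (-ρ * (t + θ * (k : ℝ))) * αs (t + θ * (k : ℝ)) *
          (1 - αs (t + θ * (k : ℝ))) * zSens r θ f₀ αs w k t)
      = -∑ l ∈ Finset.range k, ∫ t in (0 : ℝ)..θ,
          Real.exp (r * θ) * w (t + θ * (l : ℝ)) * fDen r θ f₀ αs l t * p (l + 1) t := by
  set P : ℕ → ℝ → ℝ := adjP r ρ θ T αs k with hP
  set z : ℕ → ℝ → ℝ := zSens r θ f₀ αs w with hz
  set f : ℕ → ℝ → ℝ := fDen r θ f₀ αs with hf
  set q : ℕ → ℝ → ℝ := qWt ρ θ αs with hq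
  set c : ℝ := T - (k : ℝ) * θ with hc
  have hc' : T - θ * (k : ℝ) = c := by rw [hc]; ring
  have h0c : (0 : ℝ) ≤ c := by rw [hc]; linarith
  have hcθ : c < θ := by
    rw [hc]; nlinarith [hT₂]
  -- p matches the explicit adjoint on [0, θ)
  have hpP : ∀ j ≤ k, ∀ t ∈ Set.Ico (0 : ℝ) θ, p (k - j) t = adjAux r ρ θ T αs k j t := by
    intro j hj
    induction j with
    | zero =>
      intro t ht
      rw [Nat.sub_zero, adjAux]
      by_cases hlt : t < T - θ * (k : ℝ)
      · rw [if_pos hlt]; exact hpk₁ t ht.1 hlt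
      · rw [if_neg hlt]; exact hpk₂ t (not_lt.mp hlt) ht.2
    | succ n ih =>
      intro t ht
      have hn : n ≤ k := by omega
      have hlk : k - (n + 1) < k := by omega
      have h1 : k - (n + 1) + 1 = k - n := by omega
      have := hpl (k - (n + 1)) hlk t ht
      rw [adjAux, ← ih hn t ht, ← h1]
      exact this
  have hpP' : ∀ l ≤ k, ∀ t ∈ Set.Ico (0 : ℝ) θ, p l t = P l t := by
    intro l hl t ht
    have h1 : k - (k - l) = l := by omega
    have := hpP (k - l) (by omega) t ht
    rwa [h1] at this
  -- measurability and boundedness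
  have hzm : ∀ l, Measurable (z l) := zSens_meas hf₀m hαm hwm
  have hzb : ∀ l, BddIcc (z l) := zSens_bdd r θ hf₀b hαb hwb
  have hfm : ∀ l, Measurable (f l) := fDen_meas hf₀m hαm
  have hfb : ∀ l, BddIcc (f l) := fDen_bdd r θ hf₀b hαb
  have hqm : ∀ l, Measurable (q l) := qWt_meas hαm
  have hqb : ∀ l, BddIcc (q l) := qWt_bdd ρ θ hαb
  have hPm : ∀ l, Measurable (P l) := adjP_meas hαm k
  have hPb : ∀ l, BddIcc (P l) := adjP_bdd r ρ θ T hαb k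
  have hInt_qz : ∀ l (a b : ℝ), IntervalIntegrable (fun t => q l t * z l t) volume a b :=
    fun l a b => BddIcc.intervalIntegrable ((hqm l).mul (hzm l)) ((hqb l).mul (hzb l)) a b
  have hInt_Pz : ∀ l (a b : ℝ), IntervalIntegrable (fun t => P l t * z l t) volume a b :=
    fun l a b => BddIcc.intervalIntegrable ((hPm l).mul (hzm l)) ((hPb l).mul (hzb l)) a b
  have hInt_wfP : ∀ l : ℕ,
      IntervalIntegrable (fun t => Real.exp (r * θ) * w (t + θ * (l : ℝ)) * f l t * P (l + 1) t)
        volume 0 θ := by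
    intro l
    refine BddIcc.intervalIntegrable ?_ ?_ 0 θ
    · have h1 := hfm l; have h2 := hPm (l + 1)
      fun_prop
    · exact BddIcc.mul (BddIcc.mul (BddIcc.mul (.const _) (.of_glob hwb _)) (hfb l))
        (hPb (l + 1))
  -- pointwise summation-by-parts identity
  have hkey : ∀ l < k, ∀ t : ℝ,
      q l t * z l t + Real.exp (r * θ) * w (t + θ * (l : ℝ)) * f l t * P (l + 1) t
        = P l t * z l t - P (l + 1) t * z (l + 1) t := by
    intro l hl t
    have hPrec := adjP_rec r ρ θ T αs k l hl t
    have hzrec : z (l + 1) t = Real.exp (r * θ) *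
        (-(w (t + θ * (l : ℝ))) * f l t + (1 - αs (t + θ * (l : ℝ))) * z l t) := rfl
    rw [hzrec]
    rw [← hP] at hPrec
    rw [hPrec]
    ring
  -- integral telescoping
  have hGint : ∀ l < k,
      (∫ t in (0:ℝ)..θ, q l t * z l t) +
        (∫ t in (0:ℝ)..θ, Real.exp (r * θ) * w (t + θ * (l : ℝ)) * f l t * P (l + 1) t)
      = (∫ t in (0:ℝ)..θ, P l t * z l t) - ∫ t in (0:ℝ)..θ, P (l + 1) t * z (l + 1) t := by
    intro l hl
    rw [← intervalIntegral.integral_add (hInt_qz l 0 θ) (hInt_wfP l),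
      ← intervalIntegral.integral_sub (hInt_Pz l 0 θ) (hInt_Pz (l + 1) 0 θ)]
    exact intervalIntegral.integral_congr fun t _ => hkey l hl t
  have hsum : (∑ l ∈ Finset.range k, ∫ t in (0:ℝ)..θ, q l t * z l t) +
      (∑ l ∈ Finset.range k, ∫ t in (0:ℝ)..θ,
        Real.exp (r * θ) * w (t + θ * (l : ℝ)) * f l t * P (l + 1) t)
      = (∫ t in (0:ℝ)..θ, P 0 t * z 0 t) - ∫ t in (0:ℝ)..θ, P k t * z k t := by
    rw [← Finset.sum_add_distrib,
      ← Finset.sum_range_sub' (f := fun l => ∫ t in (0:ℝ)..θ, P l t * z l t)]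
    exact Finset.sum_congr rfl fun l hl => hGint l (Finset.mem_range.mp hl)
  have hG0 : (∫ t in (0:ℝ)..θ, P 0 t * z 0 t) = 0 := by
    have : ∀ t : ℝ, P 0 t * z 0 t = 0 := by
      intro t
      have : z 0 t = 0 := rfl
      rw [this, mul_zero]
    simp [this]
  -- the top integral
  have hne : ∀ᵐ t : ℝ, t ≠ c := by
    refine MeasureTheory.ae_iff.mpr ?_
    simp only [not_not, Set.setOf_eq_eq_singleton]
    exact Real.volume_singleton
  have hGk : (∫ t in (0:ℝ)..θ, P k t * z k t) = ∫ t in (0:ℝ)..c, q k t * z k t := by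
    have hsplit : (∫ t in (0:ℝ)..θ, P k t * z k t)
        = (∫ t in (0:ℝ)..c, P k t * z k t) + ∫ t in c..θ, P k t * z k t := by
      exact (intervalIntegral.integral_add_adjacent_intervals (hInt_Pz k 0 c)
        (hInt_Pz k c θ)).symm
    have h2 : (∫ t in c..θ, P k t * z k t) = 0 := by
      rw [← intervalIntegral.integral_zero (a := c) (b := θ) (μ := volume)]
      refine intervalIntegral.integral_congr_ae ?_
      filter_upwards with t ht
      rw [Set.uIoc_of_le hcθ.le] at ht
      have : P k t = 0 := by
        rw [hP, adjP_top, hc', if_neg (not_lt.mpr ht.1.le)]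
      rw [this, zero_mul]
    have h1 : (∫ t in (0:ℝ)..c, P k t * z k t) = ∫ t in (0:ℝ)..c, q k t * z k t := by
      refine intervalIntegral.integral_congr_ae ?_
      filter_upwards [hne] with t htne ht
      rw [Set.uIoc_of_le h0c] at ht
      have htc : t < c := lt_of_le_of_ne ht.2 htne
      have : P k t = q k t := by
        rw [hP, adjP_top, hc', if_pos htc]
      rw [this]
    rw [hsplit, h2, h1, add_zero]
  -- replace p by P on the right-hand side
  have hRHS : ∀ l < k,
      (∫ t in (0:ℝ)..θ, Real.exp (r * θ) * w (t + θ * (l : ℝ)) * f l t * p (l + 1) t)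
      = ∫ t in (0:ℝ)..θ, Real.exp (r * θ) * w (t + θ * (l : ℝ)) * f l t * P (l + 1) t := by
    intro l hl
    refine intervalIntegral.integral_congr_ae ?_
    have hneθ : ∀ᵐ t : ℝ, t ≠ θ := by
      refine MeasureTheory.ae_iff.mpr ?_
      simp only [not_not, Set.setOf_eq_eq_singleton]
      exact Real.volume_singleton
    filter_upwards [hneθ] with t htne ht
    rw [Set.uIoc_of_le hθ.le] at ht
    have htIco : t ∈ Set.Ico (0:ℝ) θ := ⟨ht.1.le, lt_of_le_of_ne ht.2 htne⟩
    rw [hpP' (l + 1) (by omega) t htIco]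
  -- assemble
  show (∑ l ∈ Finset.range k, ∫ t in (0:ℝ)..θ, q l t * z l t) +
      (∫ t in (0:ℝ)..c, q k t * z k t)
      = -∑ l ∈ Finset.range k, ∫ t in (0:ℝ)..θ,
          Real.exp (r * θ) * w (t + θ * (l : ℝ)) * f l t * p (l + 1) t
  rw [Finset.sum_congr rfl fun l hl => hRHS l (Finset.mem_range.mp hl)]
  rw [hG0, zero_sub, hGk] at hsum
  linarith [hsum]
end

section
/- Let θ > 0, r, ρ ∈ ℝ, v = 2π/θ, k ∈ ℕ, T with kθ ≤ T < (k+1)θ, and f₀ : ℝ → ℝ bounded measurable. Suppose α* : ℝ → ℝ with 0 ≤ α* ≤ 1 a.e. maximizes the revenue functional G over all admissible controls. Then for every bounded measurable w with 0 ≤ α* + εw ≤ 1 a.e. for all sufficiently small ε > 0, one has 0 ≥ Σ_{l=0}^{k−1} ∫_0^{θ} w(t+θl) [ e^{−ρ(t+θl)}(1−2α*(t+θl)) − e^{rθ} p_{l+1}(t) ] f_l^{α*}(t) dt + ∫_0^{T−kθ} e^{−ρ(t+θk)} w(t+θk)(1−2α*(t+θk)) f_k^{α*}(t) dt, where p_l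 is the adjoint state defined by p_k(t) = e^{−ρ(t+θk)} α*(t+θk)(1−α*(t+θk)) on [0, T−θk) and 0 on [T−θk, θ), and p_l(t) = e^{rθ}(1−α*(t+θl)) p_{l+1}(t) + e^{−ρ(t+θl)} α*(t+θl)(1−α*(t+θl)). -/
open MeasureTheory

/-!
For small `ε > 0` the control `α* + ε w` is admissible, so `G(α* + ε w) ≤ G(α*)`.
On `(0, θ]` every factor of the revenue integrands is essentially bounded and the round
densities `f_l^α` are polynomial in `α`, so `G(α* + ε w) = G(α*) + ε DG + O(ε²)`, where the
first variation `DG` involves the sensitivities `z_l` of the densities in the direction `w`.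
Optimality forces `DG ≤ 0`. Finally, the adjoint recursion for `p_l` makes the `z_l`-terms of
`DG` telescope, which turns `DG` into the adjoint form of the statement.
-/

open Set Filter Topology

theorem MeasureTheory.MemLp.mul_top {X : Type*} [MeasurableSpace X] {μ : Measure X}
    {u v : X → ℝ} (hu : MemLp u ⊤ μ) (hv : MemLp v ⊤ μ) : MemLp (fun x => u x * v x) ⊤ μ :=
  hv.mul' hu

section Expansion

variable {X : Type*} [MeasurableSpace X] {μ : Measure X} {f g : ℝ → X → ℝ} {f₀ f₁ g₀ g₁ : X → ℝ}

def HasExpansion (μ : Measure X) (g : ℝ → X → ℝ) (g₀ g₁ : X → ℝ) : Prop :=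
  ∃ C ≥ 0, ∀ ε ∈ Icc (0 : ℝ) 1, ∀ᵐ x ∂μ, |g ε x - g₀ x - ε * g₁ x| ≤ C * ε ^ 2

theorem abs_mul_sub_le_of_expansion {ε x x₀ x₁ y y₀ y₁ A B X₀ X₁ Y₀ Y₁ : ℝ}
    (hε : ε ∈ Icc (0 : ℝ) 1) (hA : 0 ≤ A)
    (hx : |x - x₀ - ε * x₁| ≤ A * ε ^ 2) (hy : |y - y₀ - ε * y₁| ≤ B * ε ^ 2)
    (hx₀ : |x₀| ≤ X₀) (hx₁ : |x₁| ≤ X₁) (hy₀ : |y₀| ≤ Y₀) (hy₁ : |y₁| ≤ Y₁) :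
    |x * y - x₀ * y₀ - ε * (x₀ * y₁ + x₁ * y₀)| ≤
      ((X₀ + X₁ + A) * B + A * Y₀ + (X₁ + A) * Y₁) * ε ^ 2 := by
  obtain ⟨hε0, hε1⟩ := hε
  have hX₀ : 0 ≤ X₀ := (abs_nonneg _).trans hx₀
  have hX₁ : 0 ≤ X₁ := (abs_nonneg _).trans hx₁
  have hdx : |x - x₀| ≤ (X₁ + A) * ε :=
    calc |x - x₀| = |ε * x₁ + (x - x₀ - ε * x₁)| := by ring_nf
      _ ≤ ε * X₁ + A * ε ^ 2 := by
        refine (abs_add_le _ _).trans (add_le_add ?_ hx)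
        rw [abs_mul, abs_of_nonneg hε0]
        exact mul_le_mul_of_nonneg_left hx₁ hε0
      _ ≤ (X₁ + A) * ε := by nlinarith [mul_nonneg (mul_nonneg hA hε0) (sub_nonneg.2 hε1)]
  have hxb : |x| ≤ X₀ + X₁ + A :=
    calc |x| = |x₀ + (x - x₀)| := by ring_nf
      _ ≤ X₀ + (X₁ + A) * ε := (abs_add_le _ _).trans (add_le_add hx₀ hdx)
      _ ≤ X₀ + X₁ + A := by nlinarith
  calc |x * y - x₀ * y₀ - ε * (x₀ * y₁ + x₁ * y₀)|
      = |x * (y - y₀ - ε * y₁) + (x - x₀ - ε * x₁) * y₀ + ε * (x - x₀) * y₁| := by ring_nf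
    _ ≤ |x| * |y - y₀ - ε * y₁| + |x - x₀ - ε * x₁| * |y₀| + ε * |x - x₀| * |y₁| := by
      refine (abs_add_le _ _).trans (add_le_add ((abs_add_le _ _).trans ?_) ?_) <;>
        simp only [abs_mul, abs_of_nonneg hε0, le_refl]
    _ ≤ (X₀ + X₁ + A) * (B * ε ^ 2) + A * ε ^ 2 * Y₀ + ε * ((X₁ + A) * ε) * Y₁ := by
      gcongr
    _ = ((X₀ + X₁ + A) * B + A * Y₀ + (X₁ + A) * Y₁) * ε ^ 2 := by ring

namespace HasExpansion

theorem of_quadratic {g₂ : X → ℝ} (h : ∀ ε x, g ε x = g₀ x + ε * g₁ x + ε ^ 2 * g₂ x)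
    (hg₂ : MemLp g₂ ⊤ μ) : HasExpansion μ g g₀ g₁ := by
  refine ⟨max (lpNorm g₂ ⊤ μ) 0, le_max_right _ _, fun ε _ => ?_⟩
  filter_upwards [ae_le_lpNorm_exponent_top hg₂] with x hx
  rw [show g ε x - g₀ x - ε * g₁ x = ε ^ 2 * g₂ x by rw [h]; ring, abs_mul,
    abs_of_nonneg (sq_nonneg ε), mul_comm]
  exact mul_le_mul_of_nonneg_right (hx.trans (le_max_left _ _)) (sq_nonneg ε)

theorem of_affine (h : ∀ ε x, g ε x = g₀ x + ε * g₁ x) : HasExpansion μ g g₀ g₁ :=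
  ⟨0, le_rfl, fun ε _ => ae_of_all _ fun x => by simp [h]⟩

theorem congr_deriv {g₁' : X → ℝ} (h : HasExpansion μ g g₀ g₁) (h₁ : ∀ x, g₁ x = g₁' x) :
    HasExpansion μ g g₀ g₁' :=
  funext h₁ ▸ h

theorem add (hf : HasExpansion μ f f₀ f₁) (hg : HasExpansion μ g g₀ g₁) :
    HasExpansion μ (fun ε x => f ε x + g ε x) (fun x => f₀ x + g₀ x)
      (fun x => f₁ x + g₁ x) := by
  obtain ⟨A, hA, hfA⟩ := hf
  obtain ⟨B, hB, hgB⟩ := hg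
  refine ⟨A + B, add_nonneg hA hB, fun ε hε => ?_⟩
  filter_upwards [hfA ε hε, hgB ε hε] with x hx hy
  calc |f ε x + g ε x - (f₀ x + g₀ x) - ε * (f₁ x + g₁ x)|
      = |(f ε x - f₀ x - ε * f₁ x) + (g ε x - g₀ x - ε * g₁ x)| := by ring_nf
    _ ≤ (A + B) * ε ^ 2 := (abs_add_le _ _).trans (by linarith)

theorem sum {ι : Type*} (s : Finset ι) {g : ι → ℝ → X → ℝ} {g₀ g₁ : ι → X → ℝ}
    (h : ∀ i ∈ s, HasExpansion μ (g i) (g₀ i) (g₁ i)) :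
    HasExpansion μ (fun ε x => ∑ i ∈ s, g i ε x) (fun x => ∑ i ∈ s, g₀ i x)
      (fun x => ∑ i ∈ s, g₁ i x) := by
  classical
  induction s using Finset.induction_on with
  | empty => exact of_affine fun ε x => by simp
  | insert a s ha ih =>
    simp only [Finset.sum_insert ha]
    exact (h a (s.mem_insert_self a)).add (ih fun i hi => h i (Finset.mem_insert_of_mem hi))

theorem indicator (h : HasExpansion μ g g₀ g₁) (s : Set X) :
    HasExpansion μ (fun ε => s.indicator (g ε)) (s.indicator g₀) (s.indicator g₁) := by
  obtain ⟨C, hC, hgC⟩ := h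
  refine ⟨C, hC, fun ε hε => ?_⟩
  filter_upwards [hgC ε hε] with x hx
  by_cases hxs : x ∈ s
  · simpa [indicator_of_mem hxs] using hx
  · simp only [indicator_of_notMem hxs, sub_zero, mul_zero, abs_zero]
    exact mul_nonneg hC (sq_nonneg ε)

theorem mul (hf : HasExpansion μ f f₀ f₁) (hg : HasExpansion μ g g₀ g₁)
    (hf₀ : MemLp f₀ ⊤ μ) (hf₁ : MemLp f₁ ⊤ μ) (hg₀ : MemLp g₀ ⊤ μ) (hg₁ : MemLp g₁ ⊤ μ) :
    HasExpansion μ (fun ε x => f ε x * g ε x) (fun x => f₀ x * g₀ x)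
      (fun x => f₀ x * g₁ x + f₁ x * g₀ x) := by
  obtain ⟨A, hA, hfA⟩ := hf
  obtain ⟨B, hB, hgB⟩ := hg
  set X₀ := lpNorm f₀ ⊤ μ
  set X₁ := lpNorm f₁ ⊤ μ
  set Y₀ := lpNorm g₀ ⊤ μ
  set Y₁ := lpNorm g₁ ⊤ μ
  have hC : 0 ≤ (X₀ + X₁ + A) * B + A * Y₀ + (X₁ + A) * Y₁ := by
    have := lpNorm_nonneg (f := f₀) (p := ⊤) (μ := μ)
    have := lpNorm_nonneg (f := f₁) (p := ⊤) (μ := μ)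
    have := lpNorm_nonneg (f := g₀) (p := ⊤) (μ := μ)
    have := lpNorm_nonneg (f := g₁) (p := ⊤) (μ := μ)
    positivity
  refine ⟨_, hC, fun ε hε => ?_⟩
  filter_upwards [hfA ε hε, hgB ε hε, ae_le_lpNorm_exponent_top hf₀,
    ae_le_lpNorm_exponent_top hf₁, ae_le_lpNorm_exponent_top hg₀,
    ae_le_lpNorm_exponent_top hg₁] with x hx hy h₀ h₁ h₂ h₃
  exact abs_mul_sub_le_of_expansion hε hA hx hy h₀ h₁ h₂ h₃

theorem integral [IsFiniteMeasure μ] (h : HasExpansion μ g g₀ g₁)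
    (hg : ∀ ε ∈ Icc (0 : ℝ) 1, Integrable (g ε) μ) (hg₀ : Integrable g₀ μ)
    (hg₁ : Integrable g₁ μ) :
    ∃ C, ∀ ε ∈ Icc (0 : ℝ) 1,
      |∫ x, g ε x ∂μ - ∫ x, g₀ x ∂μ - ε * ∫ x, g₁ x ∂μ| ≤ C * ε ^ 2 := by
  obtain ⟨C, -, hC⟩ := h
  refine ⟨C * μ.real univ, fun ε hε => ?_⟩
  have hint : ∫ x, (g ε x - g₀ x - ε * g₁ x) ∂μ =
      ∫ x, g ε x ∂μ - ∫ x, g₀ x ∂μ - ε * ∫ x, g₁ x ∂μ := by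
    rw [integral_sub (f := fun x => g ε x - g₀ x) ((hg ε hε).sub hg₀) (hg₁.const_mul ε),
      integral_sub (hg ε hε) hg₀, integral_const_mul]
  rw [← hint, mul_right_comm]
  exact norm_integral_le_of_norm_le_const (f := fun x => g ε x - g₀ x - ε * g₁ x) (hC ε hε)

end HasExpansion

theorem nonpos_of_forall_le_of_expansion {φ : ℝ → ℝ} {a D C ε₀ : ℝ} (hε₀ : 0 < ε₀)
    (hmax : ∀ ε, 0 < ε → ε ≤ ε₀ → φ ε ≤ a)
    (hexp : ∀ ε ∈ Icc (0 : ℝ) 1, |φ ε - a - ε * D| ≤ C * ε ^ 2) : D ≤ 0 := by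
  have hD : ∀ᶠ ε in 𝓝[>] (0 : ℝ), D ≤ C * ε := by
    filter_upwards [Ioo_mem_nhdsGT (lt_min hε₀ one_pos)] with ε ⟨hε0, hε⟩
    have h₁ := (abs_le.1 (hexp ε ⟨hε0.le, hε.le.trans (min_le_right _ _)⟩)).1
    have h₂ := hmax ε hε0 (hε.le.trans (min_le_left _ _))
    refine le_of_mul_le_mul_left ?_ hε0
    nlinarith
  have hlim : Tendsto (fun ε => C * ε) (𝓝[>] 0) (𝓝 0) := by
    simpa using ((continuous_const_mul C).tendsto 0).mono_left nhdsWithin_le_nhds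
  exact ge_of_tendsto hlim hD

end Expansion

theorem memLp_top_restrict_Ioc_of_continuous {g : ℝ → ℝ} (hg : Continuous g) (a b : ℝ) :
    MemLp g ⊤ (volume.restrict (Ioc a b)) := by
  obtain ⟨C, hC⟩ := (isCompact_Icc (a := a) (b := b)).exists_bound_of_continuousOn hg.continuousOn
  exact memLp_top_of_bound hg.aestronglyMeasurable C
    ((ae_restrict_mem measurableSet_Ioc).mono fun t ht => hC t (Ioc_subset_Icc_self ht))

theorem MeasureTheory.MemLp.comp_add_right_restrict {g : ℝ → ℝ} (hg : MemLp g ⊤ volume)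
    (c : ℝ) (s : Set ℝ) : MemLp (fun t => g (t + c)) ⊤ (volume.restrict s) :=
  (hg.comp_measurePreserving (measurePreserving_add_right volume c)).restrict s

theorem ae_mem_Ioo_restrict_Ioc (a b : ℝ) : ∀ᵐ t ∂volume.restrict (Ioc a b), t ∈ Ioo a b := by
  rw [← Measure.restrict_congr_set Ioo_ae_eq_Ioc]
  exact ae_restrict_mem measurableSet_Ioo

theorem sum_intervalIntegral_add_intervalIntegral_eq {h : ℕ → ℝ → ℝ} {g : ℝ → ℝ} {k : ℕ}
    {b θ : ℝ} (hb : 0 ≤ b) (hbθ : b ≤ θ)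
    (hh : ∀ l ∈ Finset.range k, Integrable (h l) (volume.restrict (Ioc 0 θ)))
    (hg : Integrable g (volume.restrict (Ioc 0 θ))) :
    (∑ l ∈ Finset.range k, ∫ t in (0 : ℝ)..θ, h l t) + ∫ t in (0 : ℝ)..b, g t =
      ∫ t in Ioc 0 θ, (∑ l ∈ Finset.range k, h l t + (Ioc 0 b).indicator g t) := by
  rw [integral_add (integrable_finsetSum _ hh) (hg.indicator measurableSet_Ioc),
    integral_finsetSum _ hh, integral_indicator measurableSet_Ioc,
    Measure.restrict_restrict measurableSet_Ioc, Ioc_inter_Ioc, max_self, min_eq_left hbθ,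
    intervalIntegral.integral_of_le hb]
  simp only [intervalIntegral.integral_of_le (hb.trans hbθ)]

section HarvestingModel

variable {r ρ θ M T : ℝ} {k : ℕ} {f₀ α w : ℝ → ℝ} {p : ℕ → ℝ → ℝ}

theorem memLp_fDen (hf₀ : Measurable f₀) (hM : ∀ x, |f₀ x| ≤ M) (hα : MemLp α ⊤ volume)
    (l : ℕ) : MemLp (fDen r θ f₀ α l) ⊤ (volume.restrict (Ioc 0 θ)) := by
  induction l with
  | zero =>
    have hf : MemLp (fun t => f₀ (2 * Real.pi / θ * t)) ⊤ (volume.restrict (Ioc 0 θ)) :=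
      memLp_top_of_bound (hf₀.comp (measurable_const_mul _)).aestronglyMeasurable M
        (ae_of_all _ fun t => hM _)
    exact (memLp_top_restrict_Ioc_of_continuous (by fun_prop) 0 θ).mul_top hf
  | succ l ih =>
    exact (((memLp_const 1).sub (hα.comp_add_right_restrict _ _)).const_mul _).mul_top ih

theorem memLp_zSens (hf₀ : Measurable f₀) (hM : ∀ x, |f₀ x| ≤ M) (hα : MemLp α ⊤ volume)
    (hw : MemLp w ⊤ volume) (l : ℕ) :
    MemLp (zSens r θ f₀ α w l) ⊤ (volume.restrict (Ioc 0 θ)) := by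
  induction l with
  | zero => exact memLp_const 0
  | succ l ih =>
    exact (((hw.comp_add_right_restrict _ _).neg.mul_top (memLp_fDen hf₀ hM hα l)).add
      (((memLp_const 1).sub (hα.comp_add_right_restrict _ _)).mul_top ih)).const_mul _

theorem hasExpansion_fDen (hf₀ : Measurable f₀) (hM : ∀ x, |f₀ x| ≤ M)
    (hα : MemLp α ⊤ volume) (hw : MemLp w ⊤ volume) (l : ℕ) :
    HasExpansion (volume.restrict (Ioc 0 θ)) (fun ε => fDen r θ f₀ (fun s => α s + ε * w s) l)
      (fDen r θ f₀ α l) (zSens r θ f₀ α w l) := by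
  induction l with
  | zero => exact .of_affine fun ε t => by simp [fDen, zSens]
  | succ l ih =>
    have hα' := hα.comp_add_right_restrict (θ * l) (Ioc 0 θ)
    have hw' := hw.comp_add_right_restrict (θ * l) (Ioc 0 θ)
    have hfactor : HasExpansion (volume.restrict (Ioc 0 θ))
        (fun ε t => Real.exp (r * θ) * (1 - (α (t + θ * l) + ε * w (t + θ * l))))
        (fun t => Real.exp (r * θ) * (1 - α (t + θ * l)))
        (fun t => -(Real.exp (r * θ) * w (t + θ * l))) :=
      .of_affine fun ε t => by ring
    refine (hfactor.mul ih (((memLp_const 1).sub hα').const_mul _) (hw'.const_mul _).neg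
      (memLp_fDen hf₀ hM hα l) (memLp_zSens hf₀ hM hα hw l)).congr_deriv fun t => ?_
    simp only [zSens]
    ring

theorem memLp_discountedHarvest (hα : MemLp α ⊤ volume) (l : ℕ) :
    MemLp (fun t => Real.exp (-ρ * (t + θ * l)) * α (t + θ * l) * (1 - α (t + θ * l))) ⊤
      (volume.restrict (Ioc 0 θ)) :=
  ((memLp_top_restrict_Ioc_of_continuous (by fun_prop) 0 θ).mul_top
    (hα.comp_add_right_restrict _ _)).mul_top ((memLp_const 1).sub (hα.comp_add_right_restrict _ _))

noncomputable def revenueIntegrand (r ρ θ : ℝ) (f₀ α : ℝ → ℝ) (l : ℕ) (t : ℝ) : ℝ :=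
  Real.exp (-ρ * (t + θ * (l : ℝ))) * α (t + θ * (l : ℝ)) * (1 - α (t + θ * (l : ℝ))) *
    fDen r θ f₀ α l t

noncomputable def revenueIntegrandDeriv (r ρ θ : ℝ) (f₀ α w : ℝ → ℝ) (l : ℕ) (t : ℝ) : ℝ :=
  Real.exp (-ρ * (t + θ * (l : ℝ))) * w (t + θ * (l : ℝ)) * (1 - 2 * α (t + θ * (l : ℝ))) *
      fDen r θ f₀ α l t +
    Real.exp (-ρ * (t + θ * (l : ℝ))) * α (t + θ * (l : ℝ)) * (1 - α (t + θ * (l : ℝ))) *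
      zSens r θ f₀ α w l t

theorem memLp_revenueIntegrand (hf₀ : Measurable f₀) (hM : ∀ x, |f₀ x| ≤ M)
    (hα : MemLp α ⊤ volume) (l : ℕ) :
    MemLp (revenueIntegrand r ρ θ f₀ α l) ⊤ (volume.restrict (Ioc 0 θ)) :=
  (memLp_discountedHarvest hα l).mul_top (memLp_fDen hf₀ hM hα l)

theorem memLp_discountedHarvestDeriv (hα : MemLp α ⊤ volume) (hw : MemLp w ⊤ volume) (l : ℕ) :
    MemLp (fun t => Real.exp (-ρ * (t + θ * l)) * w (t + θ * l) * (1 - 2 * α (t + θ * l))) ⊤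
      (volume.restrict (Ioc 0 θ)) :=
  ((memLp_top_restrict_Ioc_of_continuous (by fun_prop) 0 θ).mul_top
    (hw.comp_add_right_restrict _ _)).mul_top
      ((memLp_const 1).sub ((hα.comp_add_right_restrict _ _).const_mul 2))

theorem memLp_revenueIntegrandDeriv (hf₀ : Measurable f₀) (hM : ∀ x, |f₀ x| ≤ M)
    (hα : MemLp α ⊤ volume) (hw : MemLp w ⊤ volume) (l : ℕ) :
    MemLp (revenueIntegrandDeriv r ρ θ f₀ α w l) ⊤ (volume.restrict (Ioc 0 θ)) :=
  ((memLp_discountedHarvestDeriv hα hw l).mul_top (memLp_fDen hf₀ hM hα l)).add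
    ((memLp_discountedHarvest hα l).mul_top (memLp_zSens hf₀ hM hα hw l))

theorem hasExpansion_revenueIntegrand (hf₀ : Measurable f₀) (hM : ∀ x, |f₀ x| ≤ M)
    (hα : MemLp α ⊤ volume) (hw : MemLp w ⊤ volume) (l : ℕ) :
    HasExpansion (volume.restrict (Ioc 0 θ))
      (fun ε => revenueIntegrand r ρ θ f₀ (fun s => α s + ε * w s) l)
      (revenueIntegrand r ρ θ f₀ α l) (revenueIntegrandDeriv r ρ θ f₀ α w l) := by
  have hE := memLp_top_restrict_Ioc_of_continuous
    (g := fun t => Real.exp (-ρ * (t + θ * l))) (by fun_prop) 0 θ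
  have hw' := hw.comp_add_right_restrict (θ * l) (Ioc 0 θ)
  have hharvest : HasExpansion (volume.restrict (Ioc 0 θ))
      (fun ε t => Real.exp (-ρ * (t + θ * l)) * (α (t + θ * l) + ε * w (t + θ * l)) *
        (1 - (α (t + θ * l) + ε * w (t + θ * l))))
      (fun t => Real.exp (-ρ * (t + θ * l)) * α (t + θ * l) * (1 - α (t + θ * l)))
      (fun t => Real.exp (-ρ * (t + θ * l)) * w (t + θ * l) * (1 - 2 * α (t + θ * l))) :=
    .of_quadratic (g₂ := fun t => -(Real.exp (-ρ * (t + θ * l)) * w (t + θ * l) * w (t + θ * l)))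
      (fun ε t => by ring) ((hE.mul_top hw').mul_top hw').neg
  refine (hharvest.mul (hasExpansion_fDen hf₀ hM hα hw l) (memLp_discountedHarvest hα l)
    (memLp_discountedHarvestDeriv hα hw l) (memLp_fDen hf₀ hM hα l)
    (memLp_zSens hf₀ hM hα hw l)).congr_deriv fun t => ?_
  simp only [revenueIntegrandDeriv]
  ring

theorem revenue_eq_setIntegral (hb : 0 ≤ T - k * θ) (hbθ : T - k * θ ≤ θ)
    (hf₀ : Measurable f₀) (hM : ∀ x, |f₀ x| ≤ M) (hα : MemLp α ⊤ volume) :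
    revenue r ρ θ T k f₀ α =
      ∫ t in Ioc 0 θ, (∑ l ∈ Finset.range k, revenueIntegrand r ρ θ f₀ α l t +
        (Ioc 0 (T - k * θ)).indicator (revenueIntegrand r ρ θ f₀ α k) t) :=
  sum_intervalIntegral_add_intervalIntegral_eq hb hbθ
    (fun l _ => (memLp_revenueIntegrand hf₀ hM hα l).integrable le_top)
    ((memLp_revenueIntegrand hf₀ hM hα k).integrable le_top)

noncomputable def firstVariation (r ρ θ T : ℝ) (k : ℕ) (f₀ α w : ℝ → ℝ) : ℝ :=
  ∫ t in Ioc 0 θ, (∑ l ∈ Finset.range k, revenueIntegrandDeriv r ρ θ f₀ α w l t +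
    (Ioc 0 (T - k * θ)).indicator (revenueIntegrandDeriv r ρ θ f₀ α w k) t)

theorem revenue_expansion (hb : 0 ≤ T - k * θ) (hbθ : T - k * θ ≤ θ)
    (hf₀ : Measurable f₀) (hM : ∀ x, |f₀ x| ≤ M) (hα : MemLp α ⊤ volume)
    (hw : MemLp w ⊤ volume) :
    ∃ C, ∀ ε ∈ Icc (0 : ℝ) 1,
      |revenue r ρ θ T k f₀ (fun s => α s + ε * w s) - revenue r ρ θ T k f₀ α -
        ε * firstVariation r ρ θ T k f₀ α w| ≤ C * ε ^ 2 := by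
  have hint : ∀ {h : ℕ → ℝ → ℝ}, (∀ l, MemLp (h l) ⊤ (volume.restrict (Ioc 0 θ))) →
      Integrable (fun t => ∑ l ∈ Finset.range k, h l t + (Ioc 0 (T - k * θ)).indicator (h k) t)
        (volume.restrict (Ioc 0 θ)) := fun hh =>
    (integrable_finsetSum _ fun l _ => (hh l).integrable le_top).add
      (((hh k).integrable le_top).indicator measurableSet_Ioc)
  have hαε : ∀ ε : ℝ, MemLp (fun s => α s + ε * w s) ⊤ volume := fun ε => hα.add (hw.const_mul ε)
  have hexp := (HasExpansion.sum (Finset.range k) fun l _ =>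
    hasExpansion_revenueIntegrand (r := r) (ρ := ρ) (θ := θ) hf₀ hM hα hw l).add
    ((hasExpansion_revenueIntegrand (r := r) (ρ := ρ) hf₀ hM hα hw k).indicator (Ioc 0 (T - k * θ)))
  obtain ⟨C, hC⟩ := hexp.integral (fun ε _ => hint fun l => memLp_revenueIntegrand hf₀ hM (hαε ε) l)
    (hint fun l => memLp_revenueIntegrand hf₀ hM hα l)
    (hint fun l => memLp_revenueIntegrandDeriv hf₀ hM hα hw l)
  refine ⟨C, fun ε hε => ?_⟩
  rw [revenue_eq_setIntegral hb hbθ hf₀ hM (hαε ε), revenue_eq_setIntegral hb hbθ hf₀ hM hα]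
  exact hC ε hε

theorem memLp_adjoint (hα : MemLp α ⊤ volume)
    (hpk₁ : ∀ t : ℝ, 0 ≤ t → t < T - θ * (k : ℝ) →
      p k t = Real.exp (-ρ * (t + θ * (k : ℝ))) * α (t + θ * (k : ℝ)) *
        (1 - α (t + θ * (k : ℝ))))
    (hpk₂ : ∀ t : ℝ, T - θ * (k : ℝ) ≤ t → t < θ → p k t = 0)
    (hpl : ∀ l < k, ∀ t ∈ Ico (0 : ℝ) θ,
      p l t = Real.exp (r * θ) * (1 - α (t + θ * (l : ℝ))) * p (l + 1) t +
        Real.exp (-ρ * (t + θ * (l : ℝ))) * α (t + θ * (l : ℝ)) *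
          (1 - α (t + θ * (l : ℝ))))
    {l : ℕ} (hl : l ≤ k) : MemLp (p l) ⊤ (volume.restrict (Ioc 0 θ)) := by
  induction hl using Nat.decreasingInduction with
  | self =>
    refine ((memLp_discountedHarvest (ρ := ρ) hα k).indicator
      (measurableSet_Iio (a := T - θ * k))).ae_eq ?_
    filter_upwards [ae_mem_Ioo_restrict_Ioc 0 θ] with t ht
    by_cases htb : t ∈ Iio (T - θ * k)
    · rw [indicator_of_mem htb, hpk₁ t ht.1.le htb]
    · rw [indicator_of_notMem htb, hpk₂ t (not_lt.1 htb) ht.2]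
  | of_succ l hl ih =>
    have hrec : (fun t => Real.exp (r * θ) * (1 - α (t + θ * l)) * p (l + 1) t +
        Real.exp (-ρ * (t + θ * l)) * α (t + θ * l) * (1 - α (t + θ * l)))
          =ᵐ[volume.restrict (Ioc 0 θ)] p l := by
      filter_upwards [ae_mem_Ioo_restrict_Ioc 0 θ] with t ht
      rw [hpl l hl t (Ioo_subset_Ico_self ht)]
    have hfactor := ((memLp_const 1).sub (hα.comp_add_right_restrict (θ * l) (Ioc 0 θ))).const_mul
      (Real.exp (r * θ))
    exact MemLp.ae_eq hrec ((hfactor.mul_top ih).add (memLp_discountedHarvest hα l))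

theorem sum_revenueIntegrandDeriv_eq_adjoint {t : ℝ}
    (hpl : ∀ l < k, p l t = Real.exp (r * θ) * (1 - α (t + θ * l)) * p (l + 1) t +
        Real.exp (-ρ * (t + θ * l)) * α (t + θ * l) * (1 - α (t + θ * l))) :
    ∑ l ∈ Finset.range k, revenueIntegrandDeriv r ρ θ f₀ α w l t =
      ∑ l ∈ Finset.range k, w (t + θ * l) * (Real.exp (-ρ * (t + θ * l)) *
          (1 - 2 * α (t + θ * l)) - Real.exp (r * θ) * p (l + 1) t) * fDen r θ f₀ α l t -
        p k t * zSens r θ f₀ α w k t := by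
  -- By the adjoint recursion, the `z`-term of round `l` is `p_l z_l - p_{l+1} z_{l+1}` up to a
  -- `w f_l` term; the sum telescopes to `p_0 z_0 - p_k z_k`, and `z_0 = 0`.
  have hstep : ∀ l ∈ Finset.range k, revenueIntegrandDeriv r ρ θ f₀ α w l t =
      w (t + θ * l) * (Real.exp (-ρ * (t + θ * l)) * (1 - 2 * α (t + θ * l)) -
          Real.exp (r * θ) * p (l + 1) t) * fDen r θ f₀ α l t +
        (p l t * zSens r θ f₀ α w l t - p (l + 1) t * zSens r θ f₀ α w (l + 1) t) := by
    intro l hl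
    rw [hpl l (Finset.mem_range.1 hl)]
    simp only [revenueIntegrandDeriv, zSens]
    ring
  rw [Finset.sum_congr rfl hstep, Finset.sum_add_distrib, Finset.sum_range_sub']
  simp only [zSens]
  ring

theorem adjointForm_eq_firstVariation (hb : 0 ≤ T - k * θ) (hbθ : T - k * θ ≤ θ)
    (hf₀ : Measurable f₀) (hM : ∀ x, |f₀ x| ≤ M) (hα : MemLp α ⊤ volume)
    (hw : MemLp w ⊤ volume)
    (hpk₁ : ∀ t : ℝ, 0 ≤ t → t < T - θ * (k : ℝ) →
      p k t = Real.exp (-ρ * (t + θ * (k : ℝ))) * α (t + θ * (k : ℝ)) *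
        (1 - α (t + θ * (k : ℝ))))
    (hpk₂ : ∀ t : ℝ, T - θ * (k : ℝ) ≤ t → t < θ → p k t = 0)
    (hpl : ∀ l < k, ∀ t ∈ Ico (0 : ℝ) θ,
      p l t = Real.exp (r * θ) * (1 - α (t + θ * (l : ℝ))) * p (l + 1) t +
        Real.exp (-ρ * (t + θ * (l : ℝ))) * α (t + θ * (l : ℝ)) *
          (1 - α (t + θ * (l : ℝ)))) :
    (∑ l ∈ Finset.range k, ∫ t in (0 : ℝ)..θ,
        w (t + θ * (l : ℝ)) *
          (Real.exp (-ρ * (t + θ * (l : ℝ))) * (1 - 2 * α (t + θ * (l : ℝ))) -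
            Real.exp (r * θ) * p (l + 1) t) * fDen r θ f₀ α l t) +
      (∫ t in (0 : ℝ)..(T - (k : ℝ) * θ),
        Real.exp (-ρ * (t + θ * (k : ℝ))) * w (t + θ * (k : ℝ)) *
          (1 - 2 * α (t + θ * (k : ℝ))) * fDen r θ f₀ α k t) =
      firstVariation r ρ θ T k f₀ α w := by
  have hint : ∀ l ∈ Finset.range k, Integrable (fun t => w (t + θ * (l : ℝ)) *
      (Real.exp (-ρ * (t + θ * (l : ℝ))) * (1 - 2 * α (t + θ * (l : ℝ))) -
        Real.exp (r * θ) * p (l + 1) t) * fDen r θ f₀ α l t) (volume.restrict (Ioc 0 θ)) := by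
    intro l hl
    have hE := memLp_top_restrict_Ioc_of_continuous
      (g := fun t => Real.exp (-ρ * (t + θ * l))) (by fun_prop) 0 θ
    have hα' := hα.comp_add_right_restrict (θ * l) (Ioc 0 θ)
    have hw' := hw.comp_add_right_restrict (θ * l) (Ioc 0 θ)
    have hp := memLp_adjoint hα hpk₁ hpk₂ hpl (Finset.mem_range.1 hl)
    refine ((hw'.mul_top ((hE.mul_top ((memLp_const 1).sub (hα'.const_mul 2))).sub
      (hp.const_mul _))).mul_top (memLp_fDen hf₀ hM hα l)).integrable le_top
  rw [sum_intervalIntegral_add_intervalIntegral_eq hb hbθ hint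
    (((memLp_discountedHarvestDeriv hα hw k).mul_top (memLp_fDen hf₀ hM hα k)).integrable le_top)]
  refine integral_congr_ae ?_
  filter_upwards [ae_mem_Ioo_restrict_Ioc 0 θ, Measure.ae_ne _ (T - k * θ)] with t ht htb
  rw [sum_revenueIntegrandDeriv_eq_adjoint fun l hl => hpl l hl t (Ioo_subset_Ico_self ht)]
  rcases htb.lt_or_gt with htb | htb
  · have hmem : t ∈ Ioc 0 (T - k * θ) := ⟨ht.1, htb.le⟩
    rw [indicator_of_mem hmem, indicator_of_mem hmem, hpk₁ t ht.1.le (by linarith)]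
    simp only [revenueIntegrandDeriv]
    ring
  · have hmem : t ∉ Ioc 0 (T - k * θ) := fun h => h.2.not_gt htb
    rw [indicator_of_notMem hmem, indicator_of_notMem hmem, hpk₂ t (by linarith) ht.2]
    ring

end HarvestingModel

theorem adjoint_variational_inequality_general
    (θ : ℝ) (r ρ : ℝ) (k : ℕ) (T : ℝ)
    (hT₁ : (k : ℝ) * θ ≤ T) (hT₂ : T < ((k : ℝ) + 1) * θ)
    (f₀ : ℝ → ℝ) (hf₀m : Measurable f₀) (hf₀b : ∃ M, ∀ x, |f₀ x| ≤ M)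
    (αs : ℝ → ℝ) (hαs : Admissible αs)
    (hopt : ∀ α : ℝ → ℝ, Admissible α →
      revenue r ρ θ T k f₀ α ≤ revenue r ρ θ T k f₀ αs)
    (p : ℕ → ℝ → ℝ)
    (hpk₁ : ∀ t : ℝ, 0 ≤ t → t < T - θ * (k : ℝ) →
      p k t = Real.exp (-ρ * (t + θ * (k : ℝ))) * αs (t + θ * (k : ℝ)) *
        (1 - αs (t + θ * (k : ℝ))))
    (hpk₂ : ∀ t : ℝ, T - θ * (k : ℝ) ≤ t → t < θ → p k t = 0)
    (hpl : ∀ l < k, ∀ t ∈ Set.Ico (0 : ℝ) θ,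
      p l t = Real.exp (r * θ) * (1 - αs (t + θ * (l : ℝ))) * p (l + 1) t +
        Real.exp (-ρ * (t + θ * (l : ℝ))) * αs (t + θ * (l : ℝ)) *
          (1 - αs (t + θ * (l : ℝ)))) :
    ∀ w : ℝ → ℝ, Measurable w → (∃ M, ∀ x, |w x| ≤ M) →
      (∃ ε₀ > (0 : ℝ), ∀ ε : ℝ, 0 < ε → ε ≤ ε₀ →
        ∀ᵐ t : ℝ, 0 ≤ αs t + ε * w t ∧ αs t + ε * w t ≤ 1) →
      (∑ l ∈ Finset.range k, ∫ t in (0 : ℝ)..θ,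
          w (t + θ * (l : ℝ)) *
            (Real.exp (-ρ * (t + θ * (l : ℝ))) * (1 - 2 * αs (t + θ * (l : ℝ))) -
              Real.exp (r * θ) * p (l + 1) t) * fDen r θ f₀ αs l t) +
        (∫ t in (0 : ℝ)..(T - (k : ℝ) * θ),
          Real.exp (-ρ * (t + θ * (k : ℝ))) * w (t + θ * (k : ℝ)) *
            (1 - 2 * αs (t + θ * (k : ℝ))) * fDen r θ f₀ αs k t)
        ≤ 0 := by
  rintro w hw ⟨W, hW⟩ ⟨ε₀, hε₀, hadm⟩
  obtain ⟨M, hM⟩ := hf₀b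
  have hb : 0 ≤ T - k * θ := by linarith
  have hbθ : T - k * θ ≤ θ := by linarith
  have hα : MemLp αs ⊤ volume := memLp_top_of_bound hαs.1.aestronglyMeasurable 1
    (hαs.2.mono fun t ht => abs_le.2 ⟨by linarith [ht.1], ht.2⟩)
  have hw' : MemLp w ⊤ volume := memLp_top_of_bound hw.aestronglyMeasurable W (ae_of_all _ hW)
  rw [adjointForm_eq_firstVariation hb hbθ hf₀m hM hα hw' hpk₁ hpk₂ hpl]
  obtain ⟨C, hC⟩ := revenue_expansion (r := r) (ρ := ρ) hb hbθ hf₀m hM hα hw'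
  exact nonpos_of_forall_le_of_expansion hε₀
    (fun ε hε hεε₀ => hopt _ ⟨hαs.1.add (hw.const_mul ε), hadm ε hε hεε₀⟩) hC

/-- variational inequality in the adjoint state, proof of
Proposition 2. If `α*` maximizes the revenue functional, then for every
admissible perturbation direction `w` the adjoint form of the first variation
is nonpositive. -/
theorem adjoint_variational_inequality
    (θ : ℝ) (hθ : 0 < θ) (r ρ : ℝ) (k : ℕ) (T : ℝ)
    (hT₁ : (k : ℝ) * θ ≤ T) (hT₂ : T < ((k : ℝ) + 1) * θ)
    (f₀ : ℝ → ℝ) (hf₀m : Measurable f₀) (hf₀b : ∃ M, ∀ x, |f₀ x| ≤ M)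
    (αs : ℝ → ℝ) (hαs : Admissible αs)
    (hopt : ∀ α : ℝ → ℝ, Admissible α →
      revenue r ρ θ T k f₀ α ≤ revenue r ρ θ T k f₀ αs)
    (p : ℕ → ℝ → ℝ)
    (hpk₁ : ∀ t : ℝ, 0 ≤ t → t < T - θ * (k : ℝ) →
      p k t = Real.exp (-ρ * (t + θ * (k : ℝ))) * αs (t + θ * (k : ℝ)) *
        (1 - αs (t + θ * (k : ℝ))))
    (hpk₂ : ∀ t : ℝ, T - θ * (k : ℝ) ≤ t → t < θ → p k t = 0)
    (hpl : ∀ l < k, ∀ t ∈ Set.Ico (0 : ℝ) θ,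
      p l t = Real.exp (r * θ) * (1 - αs (t + θ * (l : ℝ))) * p (l + 1) t +
        Real.exp (-ρ * (t + θ * (l : ℝ))) * αs (t + θ * (l : ℝ)) *
          (1 - αs (t + θ * (l : ℝ)))) :
    ∀ w : ℝ → ℝ, Measurable w → (∃ M, ∀ x, |w x| ≤ M) →
      (∃ ε₀ > (0 : ℝ), ∀ ε : ℝ, 0 < ε → ε ≤ ε₀ →
        ∀ᵐ t : ℝ, 0 ≤ αs t + ε * w t ∧ αs t + ε * w t ≤ 1) →
      (∑ l ∈ Finset.range k, ∫ t in (0 : ℝ)..θ,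
          w (t + θ * (l : ℝ)) *
            (Real.exp (-ρ * (t + θ * (l : ℝ))) * (1 - 2 * αs (t + θ * (l : ℝ))) -
              Real.exp (r * θ) * p (l + 1) t) * fDen r θ f₀ αs l t) +
        (∫ t in (0 : ℝ)..(T - (k : ℝ) * θ),
          Real.exp (-ρ * (t + θ * (k : ℝ))) * w (t + θ * (k : ℝ)) *
            (1 - 2 * αs (t + θ * (k : ℝ))) * fDen r θ f₀ αs k t)
        ≤ 0 :=
  adjoint_variational_inequality_general θ r ρ k T hT₁ hT₂ f₀ hf₀m hf₀b αs hαs hopt p hpk₁ hpk₂ hpl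
end

section
/- Let N ≥ 1, y₀ > 0, and w : {1,…,N} → ℝ with w_n > 0 for all n. Then the durable-good revenue G̃(α) = y₀ Σ_{n=1}^{N} α_n (1 − Σ_{i=1}^{n} α_i) w_n Π_{i=1}^{n−1}(1−α_i) attains a global maximum on the compact set K = {α ∈ ℝ^N : α_j ≥ 0 for all j, Σ_{j=1}^{N} α_j ≤ 1}, and every maximizer α* of G̃ on K satisfies the strict inequality Σ_{j=1}^{N} α*_j < 1. -/
/-- The durable-good total revenue
`G̃(α) = y₀ Σ_{n=1}^{N} α_n (1 − Σ_{i=1}^{n} α_i) w_n Π_{i=1}^{n−1}(1−α_i)`,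
written with `0`-based indexing over `Fin N`. -/
noncomputable def durableRevenue (N : ℕ) (y₀ : ℝ) (w α : Fin N → ℝ) : ℝ :=
  y₀ * ∑ n : Fin N,
    α n * (1 - ∑ i ∈ Finset.Iic n, α i) * w n * ∏ i ∈ Finset.Iio n, (1 - α i)

/-- The simplex `K = {α ∈ ℝ^N : α_j ≥ 0 for all j, Σ_j α_j ≤ 1}`. -/
def simplexK (N : ℕ) : Set (Fin N → ℝ) :=
  {α | (∀ j, 0 ≤ α j) ∧ ∑ j, α j ≤ 1}

lemma durableRevenue_continuous (N : ℕ) (y₀ : ℝ) (w : Fin N → ℝ) :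
    Continuous (durableRevenue N y₀ w) := by
  unfold durableRevenue
  apply continuous_const.mul
  apply continuous_finset_sum
  intro n _
  exact (((continuous_apply n).mul
    (continuous_const.sub (continuous_finset_sum _ fun i _ => continuous_apply i))).mul
    continuous_const).mul
    (continuous_finset_prod _ fun i _ => continuous_const.sub (continuous_apply i))

lemma simplexK_isClosed (N : ℕ) : IsClosed (simplexK N) := by
  have : simplexK N = (⋂ j, {α : Fin N → ℝ | 0 ≤ α j}) ∩ {α | ∑ j, α j ≤ 1} := by
    ext α; simp [simplexK, Set.mem_iInter]
  rw [this]
  exact (isClosed_iInter fun j => isClosed_le continuous_const (continuous_apply j)).inter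
    (isClosed_le (continuous_finset_sum _ fun i _ => continuous_apply i) continuous_const)

lemma simplexK_isCompact (N : ℕ) : IsCompact (simplexK N) := by
  apply IsCompact.of_isClosed_subset (isCompact_Icc (a := (0 : Fin N → ℝ)) (b := 1))
    (simplexK_isClosed N)
  rintro α ⟨h0, h1⟩
  refine ⟨fun j => h0 j, fun j => ?_⟩
  calc α j ≤ ∑ i, α i := Finset.single_le_sum (fun i _ => h0 i) (Finset.mem_univ j)
  _ ≤ 1 := h1

/-- Proposition 4, existence and exclusion of the face `Σ α_j = 1`.
The durable-good revenue attains a global maximum on the simplex `K`, and every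
maximizer satisfies `Σ_j α*_j < 1`. -/
theorem durable_max_exists_and_interior_sum
    (N : ℕ) (hN : 1 ≤ N) (y₀ : ℝ) (hy : 0 < y₀)
    (w : Fin N → ℝ) (hw : ∀ n, 0 < w n) :
    (∃ αs ∈ simplexK N, IsMaxOn (durableRevenue N y₀ w) (simplexK N) αs) ∧
      ∀ αs ∈ simplexK N, IsMaxOn (durableRevenue N y₀ w) (simplexK N) αs →
        ∑ j, αs j < 1 := by
  constructor
  · exact (simplexK_isCompact N).exists_isMaxOn
      ⟨0, fun j => le_refl 0, by simp⟩
      (durableRevenue_continuous N y₀ w).continuousOn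
  · rintro αs ⟨h0, h1⟩ hmax
    by_contra hlt
    have hsum : ∑ j, αs j = 1 := le_antisymm h1 (not_lt.mp hlt)
    -- there is a positive coordinate
    have hSne : (Finset.univ.filter (fun j => 0 < αs j)).Nonempty := by
      by_contra h
      rw [Finset.not_nonempty_iff_eq_empty, Finset.filter_eq_empty_iff] at h
      have : ∑ j, αs j = 0 := Finset.sum_eq_zero fun j _ =>
        le_antisymm (not_lt.mp (h (Finset.mem_univ j))) (h0 j)
      simp [this] at hsum
    set m := (Finset.univ.filter (fun j => 0 < αs j)).max' hSne with hm_def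
    have hm_pos : 0 < αs m := by
      have := (Finset.univ.filter (fun j => 0 < αs j)).max'_mem hSne
      simpa using this
    have h_after : ∀ n, m < n → αs n = 0 := by
      intro n hn
      by_contra h
      have : n ∈ Finset.univ.filter (fun j => 0 < αs j) := by
        simp [lt_of_le_of_ne (h0 n) (Ne.symm h)]
      exact absurd (Finset.le_max' _ n this) (not_le.mpr hn)
    -- sum up to m is 1
    have hIic : ∑ i ∈ Finset.Iic m, αs i = 1 := by
      rw [← hsum]
      exact (Finset.sum_subset (Finset.subset_univ _)
        (fun x _ hx => h_after x (lt_of_not_ge (fun h => hx (Finset.mem_Iic.mpr h)))))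
    have hIio : ∑ i ∈ Finset.Iio m, αs i = 1 - αs m := by
      have : αs m + ∑ i ∈ Finset.Iio m, αs i = 1 := by
        rw [← hIic, ← Finset.Iio_insert m, Finset.sum_insert (by simp)]
      linarith
    -- each earlier coordinate is < 1
    have hlt1 : ∀ i, i < m → αs i < 1 := by
      intro i hi
      have : αs i ≤ ∑ j ∈ Finset.Iio m, αs j :=
        Finset.single_le_sum (fun j _ => h0 j) (Finset.mem_Iio.mpr hi)
      rw [hIio] at this
      linarith
    have hP : 0 < ∏ i ∈ Finset.Iio m, (1 - αs i) :=
      Finset.prod_pos fun i hi => by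
        have := hlt1 i (Finset.mem_Iio.mp hi); linarith
    -- perturbed point
    set α' := Function.update αs m (αs m / 2) with hα'
    have hα'm : α' m = αs m / 2 := Function.update_self m _ αs
    have hα'ne : ∀ i, i ≠ m → α' i = αs i := fun i hi => Function.update_of_ne hi _ αs
    have hα'K : α' ∈ simplexK N := by
      constructor
      · intro j
        rcases eq_or_ne j m with rfl | h
        · rw [hα'm]; linarith
        · rw [hα'ne j h]; exact h0 j
      · have : ∑ j, α' j = ∑ j, αs j - αs m / 2 := by
          rw [← Finset.add_sum_erase _ _ (Finset.mem_univ m),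
              ← Finset.add_sum_erase _ αs (Finset.mem_univ m), hα'm]
          have : ∑ j ∈ Finset.univ.erase m, α' j = ∑ j ∈ Finset.univ.erase m, αs j :=
            Finset.sum_congr rfl fun j hj => hα'ne j (Finset.mem_erase.mp hj).1
          rw [this]; ring
        rw [this, hsum]; linarith
    -- termwise comparison
    have hterm : ∀ n : Fin N,
        αs n * (1 - ∑ i ∈ Finset.Iic n, αs i) * w n * ∏ i ∈ Finset.Iio n, (1 - αs i) ≤
        α' n * (1 - ∑ i ∈ Finset.Iic n, α' i) * w n * ∏ i ∈ Finset.Iio n, (1 - α' i) := by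
      intro n
      rcases lt_trichotomy n m with hn | rfl | hn
      · -- n < m : identical
        have hs : ∑ i ∈ Finset.Iic n, α' i = ∑ i ∈ Finset.Iic n, αs i :=
          Finset.sum_congr rfl fun i hi =>
            hα'ne i (ne_of_lt (lt_of_le_of_lt (Finset.mem_Iic.mp hi) hn))
        have hp : ∏ i ∈ Finset.Iio n, (1 - α' i) = ∏ i ∈ Finset.Iio n, (1 - αs i) :=
          Finset.prod_congr rfl fun i hi =>
            by rw [hα'ne i (ne_of_lt (lt_trans (Finset.mem_Iio.mp hi) hn))]
        rw [hs, hp, hα'ne n (ne_of_lt hn)]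
      · -- n = m
        have hs' : ∑ i ∈ Finset.Iic m, α' i = 1 - αs m / 2 := by
          rw [← Finset.Iio_insert m, Finset.sum_insert (by simp), hα'm]
          have : ∑ i ∈ Finset.Iio m, α' i = ∑ i ∈ Finset.Iio m, αs i :=
            Finset.sum_congr rfl fun i hi => hα'ne i (ne_of_lt (Finset.mem_Iio.mp hi))
          rw [this, hIio]; ring
        have hp : ∏ i ∈ Finset.Iio m, (1 - α' i) = ∏ i ∈ Finset.Iio m, (1 - αs i) :=
          Finset.prod_congr rfl fun i hi =>
            by rw [hα'ne i (ne_of_lt (Finset.mem_Iio.mp hi))]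
        rw [hs', hp, hα'm, hIic]
        have := hw m
        have : 0 ≤ αs m / 2 * (1 - (1 - αs m / 2)) * w m * ∏ i ∈ Finset.Iio m, (1 - αs i) := by
          apply mul_nonneg (mul_nonneg (mul_nonneg (by linarith) (by linarith)) (le_of_lt (hw m)))
            (le_of_lt hP)
        linarith [this]
      · -- m < n : both zero
        rw [h_after n hn, hα'ne n (ne_of_gt hn), h_after n hn]
        simp
    have hm_strict :
        αs m * (1 - ∑ i ∈ Finset.Iic m, αs i) * w m * ∏ i ∈ Finset.Iio m, (1 - αs i) <
        α' m * (1 - ∑ i ∈ Finset.Iic m, α' i) * w m * ∏ i ∈ Finset.Iio m, (1 - α' i) := by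
      have hs' : ∑ i ∈ Finset.Iic m, α' i = 1 - αs m / 2 := by
        rw [← Finset.Iio_insert m, Finset.sum_insert (by simp), hα'm]
        have : ∑ i ∈ Finset.Iio m, α' i = ∑ i ∈ Finset.Iio m, αs i :=
          Finset.sum_congr rfl fun i hi => hα'ne i (ne_of_lt (Finset.mem_Iio.mp hi))
        rw [this, hIio]; ring
      have hp : ∏ i ∈ Finset.Iio m, (1 - α' i) = ∏ i ∈ Finset.Iio m, (1 - αs i) :=
        Finset.prod_congr rfl fun i hi =>
          by rw [hα'ne i (ne_of_lt (Finset.mem_Iio.mp hi))]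
      rw [hs', hp, hα'm, hIic]
      have h1' : (0:ℝ) < αs m / 2 * (1 - (1 - αs m / 2)) * w m * ∏ i ∈ Finset.Iio m, (1 - αs i) := by
        apply mul_pos (mul_pos (mul_pos (by linarith) (by linarith)) (hw m)) hP
      linarith [h1']
    have hsum_lt :
        (∑ n : Fin N, αs n * (1 - ∑ i ∈ Finset.Iic n, αs i) * w n * ∏ i ∈ Finset.Iio n, (1 - αs i)) <
        ∑ n : Fin N, α' n * (1 - ∑ i ∈ Finset.Iic n, α' i) * w n * ∏ i ∈ Finset.Iio n, (1 - α' i) :=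
      Finset.sum_lt_sum (fun n _ => hterm n) ⟨m, Finset.mem_univ m, hm_strict⟩
    have : durableRevenue N y₀ w αs < durableRevenue N y₀ w α' := by
      unfold durableRevenue
      exact mul_lt_mul_of_pos_left hsum_lt hy
    exact absurd (hmax hα'K) (not_le.mpr this)
end

section
/- Let N ≥ 2, y₀ > 0, and strictly increasing positive weights 0 < w_1 < w_2 < … < w_N. If α* maximizes G̃(α) = y₀ Σ_{n=1}^{N} α_n (1 − Σ_{i=1}^{n} α_i) w_n Π_{i=1}^{n−1}(1−α_i) over K = {α ∈ ℝ^N : α_j ≥ 0 for all j, Σ_j α_j ≤ 1}, then for every n ∈ {2,…,N}, α*_n = 0 implies α*_{n−1} = 0. Consequently there is an index m ∈ {0,1,…,N} such that α*_1 = … = α*_m = 0 and α*_j > 0 for all j > m. -/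
namespace DurableAux

variable {N : ℕ}

/-- The `k`-th term of the revenue sum. -/
noncomputable def Gterm (w γ : Fin N → ℝ) (k : Fin N) : ℝ :=
  γ k * (1 - ∑ i ∈ Finset.Iic k, γ i) * w k * ∏ i ∈ Finset.Iio k, (1 - γ i)

lemma revenue_eq (y₀ : ℝ) (w γ : Fin N → ℝ) :
    durableRevenue N y₀ w γ = y₀ * ∑ k, Gterm w γ k := rfl

lemma step (y₀ : ℝ) (hy : 0 < y₀)
    (w : Fin N → ℝ) (hw0 : ∀ k, 0 < w k) (hwmono : StrictMono w)
    (αs : Fin N → ℝ) (hmem : αs ∈ simplexK N)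
    (hmax : IsMaxOn (durableRevenue N y₀ w) (simplexK N) αs)
    (n m : Fin N) (hmn : (m : ℕ) + 1 = (n : ℕ)) (hn : αs n = 0) : αs m = 0 := by
  by_contra hm0
  obtain ⟨hnonneg, hsum⟩ := hmem
  have ht : 0 < αs m := (hnonneg m).lt_of_ne (Ne.symm hm0)
  have hmltn : m < n := by rw [Fin.lt_def]; omega
  have hne : m ≠ n := ne_of_lt hmltn
  have hsub : ∀ s : Finset (Fin N), ∑ i ∈ s, αs i ≤ 1 := fun s =>
    le_trans (Finset.sum_le_sum_of_subset_of_nonneg (Finset.subset_univ s)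
      (fun i _ _ => hnonneg i)) hsum
  have hpair : ∀ i : Fin N, i ≠ m → αs i + αs m ≤ 1 := by
    intro i hi
    have := hsub {i, m}
    rwa [Finset.sum_pair hi] at this
  have hP : 0 < ∏ i ∈ Finset.Iio m, (1 - αs i) := by
    apply Finset.prod_pos
    intro i hi
    have hilt : i < m := Finset.mem_Iio.mp hi
    have := hpair i (ne_of_lt hilt)
    linarith
  set S := ∑ i ∈ Finset.Iic m, αs i with hSdef
  have hS1 : S ≤ 1 := hsub _
  have hIicn : Finset.Iic n = insert n (Finset.Iic m) := by
    ext k; simp only [Finset.mem_Iic, Finset.mem_insert, Fin.le_def, Fin.ext_iff]; omega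
  have hIion : Finset.Iio n = Finset.Iic m := by
    ext k; simp only [Finset.mem_Iio, Finset.mem_Iic, Fin.lt_def, Fin.le_def]; omega
  have hIicm : Finset.Iic m = insert m (Finset.Iio m) := by
    ext k; simp only [Finset.mem_Iic, Finset.mem_Iio, Finset.mem_insert, Fin.le_def,
      Fin.lt_def, Fin.ext_iff]; omega
  have hnIicm : n ∉ Finset.Iic m := by simp only [Finset.mem_Iic, Fin.le_def]; omega
  have hmIiom : m ∉ Finset.Iio m := by simp
  have hsplit : ∀ γ : Fin N → ℝ,
      ∑ k, γ k = ∑ k ∈ (Finset.univ.erase n).erase m, γ k + γ m + γ n := by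
    intro γ
    rw [Finset.sum_erase_add _ _ (Finset.mem_erase.mpr ⟨hne, Finset.mem_univ m⟩),
      Finset.sum_erase_add _ _ (Finset.mem_univ n)]
  rcases eq_or_lt_of_le (by linarith : (0:ℝ) ≤ 1 - S) with hceq | hclt
  · -- saturated case: S = 1, shrink α m to t/2
    have hS : S = 1 := by linarith
    set β : Fin N → ℝ := fun k => if k = m then αs m / 2 else αs k with hβ
    have hβm : β m = αs m / 2 := by simp [hβ]
    have hβo : ∀ k : Fin N, k ≠ m → β k = αs k := by intro k hk; simp [hβ, hk]
    -- everything after m is zero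
    have hafter : ∀ k : Fin N, (m : ℕ) < (k : ℕ) → αs k = 0 := by
      intro k hk
      by_contra h0
      have hkpos : 0 < αs k := (hnonneg k).lt_of_ne (Ne.symm h0)
      have hkm : k ∉ Finset.Iic m := by simp only [Finset.mem_Iic, Fin.le_def]; omega
      have : S + αs k ≤ 1 := by
        have := hsub (insert k (Finset.Iic m))
        rwa [Finset.sum_insert hkm, add_comm] at this
      linarith
    have hβmem : β ∈ simplexK N := by
      constructor
      · intro j
        by_cases hj : j = m
        · rw [hj, hβm]; linarith
        · rw [hβo j hj]; exact hnonneg j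
      · calc ∑ j, β j = ∑ j, αs j - αs m / 2 := by
              rw [← Finset.sum_erase_add _ β (Finset.mem_univ m),
                ← Finset.sum_erase_add _ αs (Finset.mem_univ m), hβm,
                Finset.sum_congr rfl (fun k hk => hβo k (Finset.mem_erase.mp hk).1)]
              ring
          _ ≤ 1 := by linarith
    -- term comparison
    have hterm_eq : ∀ k : Fin N, k ≠ m → Gterm w β k = Gterm w αs k := by
      intro k hk
      rcases lt_or_gt_of_ne (fun h => hk (Fin.ext h) : (k:ℕ) ≠ (m:ℕ)) with hlt | hgt
      · have hmk : m ∉ Finset.Iic k := by simp only [Finset.mem_Iic, Fin.le_def]; omega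
        have hmk' : m ∉ Finset.Iio k := by simp only [Finset.mem_Iio, Fin.lt_def]; omega
        unfold Gterm
        rw [hβo k hk,
          Finset.sum_congr rfl (fun i hi => hβo i (ne_of_mem_of_not_mem hi hmk)),
          Finset.prod_congr rfl (fun i hi => by
            rw [hβo i (ne_of_mem_of_not_mem hi hmk')])]
      · have h1 : αs k = 0 := hafter k hgt
        have h2 : β k = 0 := by rw [hβo k hk, h1]
        unfold Gterm
        rw [h1, h2]; ring
    have hβIio : ∏ i ∈ Finset.Iio m, (1 - β i) = ∏ i ∈ Finset.Iio m, (1 - αs i) := by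
      apply Finset.prod_congr rfl
      intro i hi
      rw [hβo i (ne_of_lt (Finset.mem_Iio.mp hi))]
    have hβIic : ∑ i ∈ Finset.Iic m, β i = S - αs m / 2 := by
      rw [hIicm, Finset.sum_insert hmIiom, hβm,
        Finset.sum_congr rfl (fun i hi => hβo i (ne_of_lt (Finset.mem_Iio.mp hi)))]
      rw [hSdef, hIicm, Finset.sum_insert hmIiom]
      ring
    have htermm : Gterm w β m - Gterm w αs m
        = (αs m / 2) * (αs m / 2) * w m * ∏ i ∈ Finset.Iio m, (1 - αs i) := by
      unfold Gterm
      rw [hβm, hβIic, hβIio, ← hSdef, hS]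
      ring
    have hgain : durableRevenue N y₀ w αs < durableRevenue N y₀ w β := by
      rw [revenue_eq, revenue_eq]
      have := hwmono hmltn
      apply mul_lt_mul_of_pos_left _ hy
      rw [← Finset.sum_erase_add _ _ (Finset.mem_univ m),
        ← Finset.sum_erase_add _ (Gterm w β) (Finset.mem_univ m),
        Finset.sum_congr rfl (fun k hk => hterm_eq k (Finset.mem_erase.mp hk).1)]
      have key : 0 < αs m / 2 * (αs m / 2) * w m * ∏ i ∈ Finset.Iio m, (1 - αs i) :=
        mul_pos (mul_pos (mul_pos (by linarith) (by linarith)) (hw0 m)) hP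
      linarith [htermm, key]
    exact absurd (hmax hβmem) (not_le.mpr hgain)
  · -- unsaturated case: swap mass from m to n
    set β : Fin N → ℝ := fun k => if k = m then 0 else if k = n then αs m else αs k with hβ
    have hβm : β m = 0 := by simp [hβ]
    have hβn : β n = αs m := by simp [hβ, Ne.symm hne]
    have hβo : ∀ k : Fin N, k ≠ m → k ≠ n → β k = αs k := by
      intro k h1 h2; simp [hβ, h1, h2]
    have hsumβ : ∑ j, β j = ∑ j, αs j := by
      rw [hsplit β, hsplit αs, hβm, hβn, hn,
        Finset.sum_congr rfl (fun k hk => by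
          obtain ⟨h1, h2⟩ := Finset.mem_erase.mp hk
          exact hβo k h1 (Finset.mem_erase.mp h2).1)]
      ring
    have hβmem : β ∈ simplexK N := by
      constructor
      · intro j
        by_cases h1 : j = m
        · rw [h1, hβm]
        · by_cases h2 : j = n
          · rw [h2, hβn]; exact le_of_lt ht
          · rw [hβo j h1 h2]; exact hnonneg j
      · rw [hsumβ]; exact hsum
    -- partial sums and products for β
    have hβIiom_sum : ∀ s : Finset (Fin N), m ∉ s → n ∉ s →
        ∑ i ∈ s, β i = ∑ i ∈ s, αs i := fun s h1 h2 =>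
      Finset.sum_congr rfl (fun i hi =>
        hβo i (ne_of_mem_of_not_mem hi h1) (ne_of_mem_of_not_mem hi h2))
    have hβIiom_prod : ∀ s : Finset (Fin N), m ∉ s → n ∉ s →
        ∏ i ∈ s, (1 - β i) = ∏ i ∈ s, (1 - αs i) := fun s h1 h2 =>
      Finset.prod_congr rfl (fun i hi => by
        rw [hβo i (ne_of_mem_of_not_mem hi h1) (ne_of_mem_of_not_mem hi h2)])
    have hterm_eq : ∀ k : Fin N, k ≠ m → k ≠ n → Gterm w β k = Gterm w αs k := by
      intro k h1 h2
      have hk' : (k:ℕ) < (m:ℕ) ∨ (n:ℕ) < (k:ℕ) := by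
        have e1 : (k:ℕ) ≠ (m:ℕ) := fun h => h1 (Fin.ext h)
        have e2 : (k:ℕ) ≠ (n:ℕ) := fun h => h2 (Fin.ext h)
        omega
      rcases hk' with hlt | hgt
      · -- k before m: all indices involved are < m
        have hmk : m ∉ Finset.Iic k := by simp only [Finset.mem_Iic, Fin.le_def]; omega
        have hnk : n ∉ Finset.Iic k := by simp only [Finset.mem_Iic, Fin.le_def]; omega
        have hmk' : m ∉ Finset.Iio k := by simp only [Finset.mem_Iio, Fin.lt_def]; omega
        have hnk' : n ∉ Finset.Iio k := by simp only [Finset.mem_Iio, Fin.lt_def]; omega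
        unfold Gterm
        rw [hβo k h1 h2, hβIiom_sum _ hmk hnk, hβIiom_prod _ hmk' hnk']
      · -- k after n: sums and products over sets containing both m and n agree
        have hmk : m ∈ Finset.Iic k := by simp only [Finset.mem_Iic, Fin.le_def]; omega
        have hnk : n ∈ Finset.Iic k := by simp only [Finset.mem_Iic, Fin.le_def]; omega
        have hmk' : m ∈ Finset.Iio k := by simp only [Finset.mem_Iio, Fin.lt_def]; omega
        have hnk' : n ∈ Finset.Iio k := by simp only [Finset.mem_Iio, Fin.lt_def]; omega
        have hsum' : ∑ i ∈ Finset.Iic k, β i = ∑ i ∈ Finset.Iic k, αs i := by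
          rw [← Finset.sum_erase_add _ β hnk, ← Finset.sum_erase_add _ αs hnk,
            ← Finset.sum_erase_add _ β (Finset.mem_erase.mpr ⟨hne, hmk⟩),
            ← Finset.sum_erase_add _ αs (Finset.mem_erase.mpr ⟨hne, hmk⟩),
            hβIiom_sum _ (Finset.notMem_erase m _)
              (fun h => (Finset.mem_erase.mp (Finset.mem_of_mem_erase h)).1 rfl),
            hβm, hβn, hn]
          ring
        have hprod' : ∏ i ∈ Finset.Iio k, (1 - β i) = ∏ i ∈ Finset.Iio k, (1 - αs i) := by
          rw [← Finset.prod_erase_mul _ _ hnk', ← Finset.prod_erase_mul _ _ hnk',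
            ← Finset.prod_erase_mul _ _ (Finset.mem_erase.mpr ⟨hne, hmk'⟩),
            ← Finset.prod_erase_mul _ _ (Finset.mem_erase.mpr ⟨hne, hmk'⟩),
            hβIiom_prod _ (Finset.notMem_erase m _)
              (fun h => (Finset.mem_erase.mp (Finset.mem_of_mem_erase h)).1 rfl),
            hβm, hβn, hn]
          ring
        unfold Gterm
        rw [hβo k h1 h2, hsum', hprod']
    have hβIicm_sum : ∑ i ∈ Finset.Iic m, β i = S - αs m := by
      rw [hIicm, Finset.sum_insert hmIiom, hβm,
        hβIiom_sum _ hmIiom (fun h => hnIicm (hIicm ▸ Finset.mem_insert_of_mem h)),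
        hSdef, hIicm, Finset.sum_insert hmIiom]
      ring
    have hβIiom_prod' : ∏ i ∈ Finset.Iio m, (1 - β i) = ∏ i ∈ Finset.Iio m, (1 - αs i) :=
      hβIiom_prod _ hmIiom (fun h => hnIicm (hIicm ▸ Finset.mem_insert_of_mem h))
    have htermβm : Gterm w β m = 0 := by unfold Gterm; rw [hβm]; ring
    have htermαn : Gterm w αs n = 0 := by unfold Gterm; rw [hn]; ring
    have htermαm : Gterm w αs m = αs m * (1 - S) * w m * ∏ i ∈ Finset.Iio m, (1 - αs i) := by
      unfold Gterm; rw [← hSdef]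
    have htermβn : Gterm w β n = αs m * (1 - S) * w n * ∏ i ∈ Finset.Iio m, (1 - αs i) := by
      unfold Gterm
      rw [hβn, hIicn, Finset.sum_insert hnIicm, hβn, hβIicm_sum, hIion, hIicm,
        Finset.prod_insert hmIiom, hβm, hβIiom_prod']
      ring
    have hgain : durableRevenue N y₀ w αs < durableRevenue N y₀ w β := by
      rw [revenue_eq, revenue_eq]
      apply mul_lt_mul_of_pos_left _ hy
      rw [hsplit (Gterm w β), hsplit (Gterm w αs),
        Finset.sum_congr rfl (fun k hk => by
          obtain ⟨h1, h2⟩ := Finset.mem_erase.mp hk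
          exact (hterm_eq k h1 (Finset.mem_erase.mp h2).1).symm),
        htermβm, htermαn, htermαm, htermβn]
      have hww : w m < w n := hwmono hmltn
      have hpos : 0 < αs m * (1 - S) * ∏ i ∈ Finset.Iio m, (1 - αs i) :=
        mul_pos (mul_pos ht hclt) hP
      have key : αs m * (1 - S) * w m * ∏ i ∈ Finset.Iio m, (1 - αs i)
          < αs m * (1 - S) * w n * ∏ i ∈ Finset.Iio m, (1 - αs i) := by
        calc αs m * (1 - S) * w m * ∏ i ∈ Finset.Iio m, (1 - αs i)
            = (αs m * (1 - S) * ∏ i ∈ Finset.Iio m, (1 - αs i)) * w m := by ring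
          _ < (αs m * (1 - S) * ∏ i ∈ Finset.Iio m, (1 - αs i)) * w n :=
              mul_lt_mul_of_pos_left hww hpos
          _ = αs m * (1 - S) * w n * ∏ i ∈ Finset.Iio m, (1 - αs i) := by ring
      linarith [key]
    exact absurd (hmax hβmem) (not_le.mpr hgain)

end DurableAux

/-- Proposition 4, structural dichotomy.
With strictly increasing positive weights, the zero components of any maximizer
of the durable-good revenue on the simplex form an initial segment. -/
theorem durable_max_zeros_initial_segment
    (N : ℕ) (hN : 2 ≤ N) (y₀ : ℝ) (hy : 0 < y₀)
    (w : Fin N → ℝ) (hw0 : ∀ n, 0 < w n) (hwmono : StrictMono w)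
    (αs : Fin N → ℝ) (hmem : αs ∈ simplexK N)
    (hmax : IsMaxOn (durableRevenue N y₀ w) (simplexK N) αs) :
    (∀ n m : Fin N, (m : ℕ) + 1 = (n : ℕ) → αs n = 0 → αs m = 0) ∧
      ∃ m : ℕ, m ≤ N ∧ (∀ j : Fin N, (j : ℕ) < m → αs j = 0) ∧
        ∀ j : Fin N, m ≤ (j : ℕ) → 0 < αs j := by
  have step : ∀ n m : Fin N, (m : ℕ) + 1 = (n : ℕ) → αs n = 0 → αs m = 0 :=
    fun n m h hn => DurableAux.step y₀ hy w hw0 hwmono αs hmem hmax n m h hn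
  refine ⟨step, ?_⟩
  have hnonneg := hmem.1
  have down : ∀ d : ℕ, ∀ j : Fin N, αs j = 0 → ∀ k : Fin N, (k : ℕ) + d = (j : ℕ) → αs k = 0 := by
    intro d
    induction d with
    | zero =>
      intro j hj k hk
      have : k = j := Fin.ext (by omega)
      rwa [this]
    | succ d ih =>
      intro j hj k hk
      have hk1 : (k : ℕ) + 1 < N := by have := j.isLt; omega
      have h1 : αs ⟨(k : ℕ) + 1, hk1⟩ = 0 := ih j hj ⟨(k : ℕ) + 1, hk1⟩ (by simp; omega)
      exact step ⟨(k : ℕ) + 1, hk1⟩ k rfl h1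
  by_cases hpos : ∃ j : Fin N, 0 < αs j
  · set A : Finset (Fin N) := Finset.univ.filter (fun j => 0 < αs j) with hA
    have hAne : A.Nonempty := by
      obtain ⟨j, hj⟩ := hpos
      exact ⟨j, by simp [hA, hj]⟩
    set j₀ := A.min' hAne with hj₀
    have hj₀pos : 0 < αs j₀ := by
      have := A.min'_mem hAne
      simpa [hA] using this
    refine ⟨(j₀ : ℕ), le_of_lt j₀.isLt, ?_, ?_⟩
    · intro j hj
      by_contra h0
      have hjpos : 0 < αs j := (hnonneg j).lt_of_ne (Ne.symm h0)
      have : j₀ ≤ j := A.min'_le j (by simp [hA, hjpos])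
      rw [Fin.le_def] at this
      omega
    · intro j hj
      by_contra h0
      have hj0 : αs j = 0 := le_antisymm (not_lt.mp h0) (hnonneg j)
      have : αs j₀ = 0 := down ((j : ℕ) - (j₀ : ℕ)) j hj0 j₀ (by omega)
      linarith
  · refine ⟨N, le_refl N, ?_, ?_⟩
    · intro j _
      have := hnonneg j
      have h2 := not_exists.mp hpos j
      linarith
    · intro j hj
      have := j.isLt
      omega
end
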